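/- arXiv:0802.1823 — 8 statements merged into one kernel-verified Lean document; each statement's English description precedes it below -/
import Mathlib

section
/- Let ε > 0 and let g: ℝ → ℝ be continuous with g(0) = 0 and g(η) < 0 for all η ∈ [−ε, 0), and suppose the improper integral ∫_{−ε}^{0} dη/g(η) converges (i.e. lim_{b→0⁻} ∫_{−ε}^{b} dη/g(η) exists in ℝ). Then there exist T > 0 and a differentiable function y: [0,T] → [−ε, 0] with y(0) = 0, y'(t) = g(y(t)) for all t ∈ [0,T], and y(t) < 0 for all t ∈ (0,T]. In particular, the initial value problem y' = g(y), y(0) = 0 has more than one solution with values in [−ε,0] (the zero function also being a solution). -/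
open MeasureTheory Filter intervalIntegral Set Topology

/-- failure of Osgood's condition yields a nontrivial solution. If `g`
is continuous with `g(0) = 0`, `g < 0` on `[−ε, 0)`, and the improper integral
`∫_{−ε}^{0} dη/g(η)` converges, then the initial value problem `y' = g(y)`, `y(0) = 0`
has a solution with values in `[−ε,0]` that is strictly negative on `(0,T]`. -/
theorem osgood_failure_nontrivial_solution (ε : ℝ) (hε : 0 < ε) (g : ℝ → ℝ)
    (hg : Continuous g) (hg0 : g 0 = 0)
    (hgneg : ∀ η ∈ Set.Ico (-ε) (0 : ℝ), g η < 0)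
    (hconv : ∃ L : ℝ, Tendsto (fun b : ℝ => ∫ η in (-ε)..b, 1 / g η)
      (nhdsWithin 0 (Set.Iio 0)) (nhds L)) :
    ∃ T : ℝ, 0 < T ∧ ∃ y : ℝ → ℝ, y 0 = 0 ∧
      (∀ t ∈ Set.Icc (0 : ℝ) T, y t ∈ Set.Icc (-ε) (0 : ℝ)) ∧
      (∀ t ∈ Set.Icc (0 : ℝ) T, HasDerivAt y (g (y t)) t) ∧
      (∀ t ∈ Set.Ioc (0 : ℝ) T, y t < 0) := by
  obtain ⟨L, hL⟩ := hconv
  set F : ℝ → ℝ := fun b => ∫ η in (-ε)..b, 1 / g η with hFdef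
  have hε0 : -ε < 0 := by linarith
  -- integrability of 1/g on subintervals of [-ε, 0)
  have hInt : ∀ b ∈ Ico (-ε) (0:ℝ), ∀ c ∈ Ico (-ε) (0:ℝ),
      IntervalIntegrable (fun η => 1 / g η) volume b c := by
    intro b hb c hc
    apply ContinuousOn.intervalIntegrable
    intro x hx
    have hxm : x ∈ Ico (-ε) (0:ℝ) := Set.ordConnected_Ico.uIcc_subset hb hc hx
    exact (continuousAt_const.div hg.continuousAt (hgneg x hxm).ne).continuousWithinAt
  -- FTC : derivative of F
  have hFderiv : ∀ b ∈ Ico (-ε) (0:ℝ), HasDerivAt F (1 / g b) b := by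
    intro b hb
    exact intervalIntegral.integral_hasDerivAt_right
      (hInt _ ⟨le_rfl, hε0⟩ _ hb)
      ((measurable_const.div hg.measurable).stronglyMeasurable.stronglyMeasurableAtFilter)
      (continuousAt_const.div hg.continuousAt (hgneg b hb).ne)
  have hFa : F (-ε) = 0 := intervalIntegral.integral_same
  -- strict antitonicity of F on [-ε, 0)
  have hFanti : ∀ b ∈ Ico (-ε) (0:ℝ), ∀ c ∈ Ico (-ε) (0:ℝ), b < c → F c < F b := by
    intro b hb c hc hbc
    have hadd : (∫ η in (-ε)..b, 1 / g η) + (∫ η in b..c, 1 / g η)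
        = ∫ η in (-ε)..c, 1 / g η :=
      intervalIntegral.integral_add_adjacent_intervals (hInt _ ⟨le_rfl, hε0⟩ _ hb) (hInt _ hb _ hc)
    have hpos : 0 < ∫ η in b..c, -(1 / g η) := by
      apply intervalIntegral.intervalIntegral_pos_of_pos_on ((hInt _ hb _ hc).neg)
      · intro x hx
        have hxm : x ∈ Ico (-ε) (0:ℝ) := ⟨le_trans hb.1 hx.1.le, hx.2.trans hc.2⟩
        have := hgneg x hxm
        show (0:ℝ) < -(1 / g x)
        exact neg_pos.2 (one_div_neg.2 this)
      · exact hbc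
    rw [intervalIntegral.integral_neg] at hpos
    have : (∫ η in b..c, 1 / g η) < 0 := by linarith
    have hFb : F b = ∫ η in (-ε)..b, 1 / g η := rfl
    have hFc : F c = ∫ η in (-ε)..c, 1 / g η := rfl
    rw [hFb, hFc, ← hadd]; linarith
  -- L is strictly below F b for all b ∈ [-ε, 0)
  have hLlt : ∀ b ∈ Ico (-ε) (0:ℝ), L < F b := by
    intro b hb
    have hb0 : b < 0 := hb.2
    have hmmem : b / 2 ∈ Ico (-ε) (0:ℝ) := ⟨by linarith [hb.1], by linarith⟩
    have hbm : b < b / 2 := by linarith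
    have h1 : L ≤ F (b / 2) := by
      refine le_of_tendsto hL ?_
      filter_upwards [Ioo_mem_nhdsLT_of_mem (⟨by linarith [hmmem.2], le_rfl⟩ :
        (0:ℝ) ∈ Ioc (b/2) 0)] with x hx
      exact (hFanti _ hmmem _ ⟨le_trans hmmem.1 hx.1.le, hx.2⟩ hx.1).le
    exact lt_of_le_of_lt h1 (hFanti _ hb _ hmmem hbm)
  have hA : 0 < -L := by
    have := hLlt (-ε) ⟨le_rfl, hε0⟩
    rw [hFa] at this; linarith
  -- surjectivity onto (0, -L)
  have hsurj : ∀ t ∈ Ioo (0:ℝ) (-L), ∃ b, b ∈ Ioo (-ε) (0:ℝ) ∧ F b = t + L := by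
    intro t ht
    have hev : ∀ᶠ c in 𝓝[<] (0:ℝ), F c - L < t ∧ c ∈ Ioo (-ε) (0:ℝ) := by
      have h1 : ∀ᶠ c in 𝓝[<] (0:ℝ), F c - L < t := by
        have : Tendsto (fun c => F c - L) (𝓝[<] (0:ℝ)) (𝓝 0) := by
          simpa using hL.sub_const L
        exact this.eventually (Filter.Tendsto.eventually_lt_const ht.1 tendsto_id)
      filter_upwards [h1, Ioo_mem_nhdsLT_of_mem (⟨hε0, le_rfl⟩ : (0:ℝ) ∈ Ioc (-ε) 0)]
        with c h1 h2; exact ⟨h1, h2⟩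
    obtain ⟨c, hc1, hc2⟩ := hev.exists
    have hcont : ContinuousOn F (Icc (-ε) c) := by
      intro x hx
      exact (hFderiv x ⟨hx.1, lt_of_le_of_lt hx.2 hc2.2⟩).continuousAt.continuousWithinAt
    have himage := intermediate_value_Ioo' (le_of_lt hc2.1) hcont
    have hmem : t + L ∈ Ioo (F c) (F (-ε)) := by
      rw [hFa]; exact ⟨by linarith, by linarith [ht.2]⟩
    obtain ⟨b, hb1, hb2⟩ := himage hmem
    exact ⟨b, ⟨hb1.1, hb1.2.trans hc2.2⟩, hb2⟩
  choose! yb hyb1 hyb2 using hsurj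
  set y : ℝ → ℝ := fun t => if t ∈ Ioo (0:ℝ) (-L) then yb t else 0 with hydef
  have hy0 : y 0 = 0 := by simp [hydef]
  have hymem : ∀ t ∈ Ioo (0:ℝ) (-L), y t ∈ Ioo (-ε) (0:ℝ) ∧ F (y t) = t + L := by
    intro t ht
    have : y t = yb t := by simp only [hydef]; rw [if_pos ht]
    rw [this]
    exact ⟨hyb1 t ht, hyb2 t ht⟩
  -- comparison lemmas
  have hlt1 : ∀ t ∈ Ioo (0:ℝ) (-L), ∀ c ∈ Ico (-ε) (0:ℝ), t < F c - L → c < y t := by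
    intro t ht c hc hFc
    obtain ⟨hym, hyF⟩ := hymem t ht
    rcases lt_trichotomy c (y t) with h | h | h
    · exact h
    · exfalso; rw [← h] at hyF; linarith
    · exfalso
      have := hFanti _ ⟨hym.1.le, hym.2⟩ _ hc h
      linarith
  have hlt2 : ∀ t ∈ Ioo (0:ℝ) (-L), ∀ c ∈ Ico (-ε) (0:ℝ), F c - L < t → y t < c := by
    intro t ht c hc hFc
    obtain ⟨hym, hyF⟩ := hymem t ht
    rcases lt_trichotomy (y t) c with h | h | h
    · exact h
    · exfalso; rw [h] at hyF; linarith
    · exfalso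
      have := hFanti _ hc _ ⟨hym.1.le, hym.2⟩ h
      linarith
  -- continuity of y at interior points
  have hycont : ∀ t ∈ Ioo (0:ℝ) (-L), ContinuousAt y t := by
    intro t ht
    obtain ⟨hym, hyF⟩ := hymem t ht
    rw [ContinuousAt]
    apply tendsto_order.2
    constructor
    · intro b' hb'
      set m := max b' ((-ε + y t) / 2) with hm
      have hm1 : m < y t := max_lt hb' (by linarith [hym.1])
      have hm2 : -ε < m := lt_of_lt_of_le (by linarith [hym.1]) (le_max_right _ _)
      have hmIco : m ∈ Ico (-ε) (0:ℝ) := ⟨hm2.le, hm1.trans hym.2⟩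
      have hFm : t < F m - L := by
        have := hFanti _ hmIco _ ⟨hym.1.le, hym.2⟩ hm1
        linarith
      have hFm0 : F m < 0 := by
        have := hFanti _ ⟨le_rfl, hε0⟩ _ hmIco hm2
        rw [hFa] at this; exact this
      filter_upwards [Ioo_mem_nhds ht.1 hFm] with s hs
      have hsIoo : s ∈ Ioo (0:ℝ) (-L) := ⟨hs.1, by linarith [hs.2]⟩
      exact lt_of_le_of_lt (le_max_left _ _) (hlt1 s hsIoo m hmIco hs.2)
    · intro b' hb'
      set m := min b' (y t / 2) with hm
      have hm1 : y t < m := lt_min hb' (by linarith [hym.2])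
      have hm2 : m < 0 := lt_of_le_of_lt (min_le_right _ _) (by linarith [hym.2])
      have hmIco : m ∈ Ico (-ε) (0:ℝ) := ⟨(hym.1.trans hm1).le, hm2⟩
      have hFm : F m - L < t := by
        have := hFanti _ ⟨hym.1.le, hym.2⟩ _ hmIco hm1
        linarith
      have hFmpos : 0 < F m - L := by linarith [hLlt m hmIco]
      filter_upwards [Ioo_mem_nhds hFm ht.2] with s hs
      have hsIoo : s ∈ Ioo (0:ℝ) (-L) := ⟨by linarith [hs.1], hs.2⟩
      exact lt_of_lt_of_le (hlt2 s hsIoo m hmIco hs.1) (min_le_left _ _)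
  -- derivative of y at interior points
  have hyderiv : ∀ t ∈ Ioo (0:ℝ) (-L), HasDerivAt y (g (y t)) t := by
    intro t ht
    obtain ⟨hym, hyF⟩ := hymem t ht
    have hymIco : y t ∈ Ico (-ε) (0:ℝ) := ⟨hym.1.le, hym.2⟩
    have hgy : g (y t) < 0 := hgneg _ hymIco
    have hfd : HasDerivAt (fun b => F b - L) (1 / g (y t)) (y t) :=
      (hFderiv _ hymIco).sub_const L
    have key : HasDerivAt y (1 / g (y t))⁻¹ t := by
      apply HasDerivAt.of_local_left_inverse (hycont t ht) hfd (one_div_ne_zero hgy.ne)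
      filter_upwards [Ioo_mem_nhds ht.1 ht.2] with s hs
      have := (hymem s hs).2
      rw [this]; ring
    rwa [one_div, inv_inv] at key
  -- derivative of y at 0
  have hd0 : HasDerivAt y 0 0 := by
    rw [hasDerivAt_iff_tendsto_slope]
    rw [NormedAddCommGroup.tendsto_nhds_zero]
    intro c hc
    have hc2 : (0:ℝ) < c / 2 := by linarith
    -- continuity of g at 0 gives a δ
    have hgt : Tendsto g (𝓝 0) (𝓝 0) := by
      have := hg.continuousAt (x := (0:ℝ)); rwa [ContinuousAt, hg0] at this
    obtain ⟨δ, hδ0, hδ⟩ := Metric.tendsto_nhds_nhds.mp hgt (c/2) hc2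
    -- the key integral inequality
    have hkey : ∀ br ∈ Ico (-ε) (0:ℝ), -δ < br → -br ≤ (c/2) * (F br - L) := by
      intro br hbr hbrδ
      have hstep : ∀ b' ∈ Ioo br (0:ℝ), F b' + (b' - br) / (c/2) ≤ F br := by
        intro b' hb'
        have hb'Ico : b' ∈ Ico (-ε) (0:ℝ) := ⟨(le_trans hbr.1 hb'.1.le), hb'.2⟩
        have hadd : (∫ η in (-ε)..br, 1 / g η) + (∫ η in br..b', 1 / g η)
            = ∫ η in (-ε)..b', 1 / g η :=
          intervalIntegral.integral_add_adjacent_intervals (hInt _ ⟨le_rfl, hε0⟩ _ hbr)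
            (hInt _ hbr _ hb'Ico)
        have hmono : (∫ η in br..b', 1 / g η) ≤ ∫ η in br..b', -(c/2)⁻¹ := by
          apply intervalIntegral.integral_mono_on hb'.1.le (hInt _ hbr _ hb'Ico)
            (intervalIntegrable_const)
          intro x hx
          have hxIco : x ∈ Ico (-ε) (0:ℝ) := ⟨le_trans hbr.1 hx.1, lt_of_le_of_lt hx.2 hb'.2⟩
          have hgx : g x < 0 := hgneg x hxIco
          have hxδ : dist x 0 < δ := by
            rw [Real.dist_eq, sub_zero, abs_of_neg hxIco.2]
            linarith [hx.1]
          have hgxd : |g x| < c / 2 := by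
            have := hδ hxδ; rwa [Real.dist_eq, sub_zero] at this
          have hgxlb : -(c/2) < g x := by
            have := abs_lt.mp hgxd; linarith [this.1]
          rw [div_le_iff_of_neg hgx]
          have hinv : (0:ℝ) < (c/2)⁻¹ := inv_pos.2 hc2
          have hmc : (c/2)⁻¹ * (c/2) = 1 := inv_mul_cancel₀ hc2.ne'
          nlinarith
        rw [intervalIntegral.integral_const, smul_eq_mul] at hmono
        have hFbr : F br = ∫ η in (-ε)..br, 1 / g η := rfl
        have hFb' : F b' = ∫ η in (-ε)..b', 1 / g η := rfl
        rw [hFbr, hFb', ← hadd]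
        have : (b' - br) * -(c/2)⁻¹ = -((b' - br) / (c/2)) := by
          field_simp
        rw [this] at hmono
        linarith
      have htend : Tendsto (fun b' => F b' + (b' - br) / (c/2)) (𝓝[<] (0:ℝ))
          (𝓝 (L + (0 - br) / (c/2))) := by
        apply hL.add
        have : Tendsto (fun b' : ℝ => (b' - br) / (c/2)) (𝓝 (0:ℝ)) (𝓝 ((0 - br) / (c/2))) :=
          ((continuous_id.sub continuous_const).div_const _).tendsto 0
        exact this.mono_left nhdsWithin_le_nhds
      have hle : L + (0 - br) / (c/2) ≤ F br := by
        refine le_of_tendsto htend ?_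
        filter_upwards [Ioo_mem_nhdsLT_of_mem (⟨hbr.2, le_rfl⟩ : (0:ℝ) ∈ Ioc br 0)]
          with b' hb'
        exact hstep b' hb'
      have h1 : (-br) / (c/2) ≤ F br - L := by
        have e : (0 - br) / (c/2) = (-br) / (c/2) := by ring
        linarith
      have h2 := mul_le_mul_of_nonneg_right h1 hc2.le
      have h3 : (-br) / (c/2) * (c/2) = -br := by field_simp
      calc -br = (-br) / (c/2) * (c/2) := h3.symm
        _ ≤ (F br - L) * (c/2) := h2
        _ = (c/2) * (F br - L) := by ring
    -- set up the small time threshold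
    set b₀ := max (-δ/2) (-ε/2) with hb₀
    have hb₀Ico : b₀ ∈ Ico (-ε) (0:ℝ) :=
      ⟨le_trans (by linarith : -ε ≤ -ε/2) (le_max_right _ _),
        max_lt (by linarith) (by linarith)⟩
    have hb₀δ : -δ < b₀ := lt_of_lt_of_le (by linarith) (le_max_left _ _)
    have ht₀pos : 0 < F b₀ - L := by linarith [hLlt b₀ hb₀Ico]
    have hFb₀0 : F b₀ < 0 := by
      have := hFanti _ ⟨le_rfl, hε0⟩ _ hb₀Ico (lt_of_lt_of_le (by linarith) (le_max_right _ _))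
      rwa [hFa] at this
    have hevs : ∀ᶠ s in 𝓝[≠] (0:ℝ), s < F b₀ - L := by
      apply eventually_nhdsWithin_of_eventually_nhds
      exact Filter.Tendsto.eventually_lt_const ht₀pos tendsto_id
    filter_upwards [hevs, self_mem_nhdsWithin] with s hs hs0
    have hs0' : s ≠ 0 := hs0
    rw [slope_def_field, hy0, sub_zero, sub_zero, Real.norm_eq_abs]
    rcases lt_or_gt_of_ne hs0' with hneg | hpos
    · have : y s = 0 := by
        rw [hydef]
        simp only [mem_Ioo]
        rw [if_neg]
        rintro ⟨h1, -⟩; linarith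
      rw [this]; simpa using hc
    · have hsIoo : s ∈ Ioo (0:ℝ) (-L) := ⟨hpos, by linarith⟩
      obtain ⟨hym, hyF⟩ := hymem s hsIoo
      have hyb₀ : b₀ < y s := hlt1 s hsIoo b₀ hb₀Ico hs
      have hys0 : y s < 0 := hym.2
      have hkey' : -(y s) ≤ (c/2) * s := by
        have := hkey (y s) ⟨hym.1.le, hym.2⟩ (lt_trans hb₀δ hyb₀)
        rw [hyF] at this
        calc -(y s) ≤ (c/2) * (s + L - L) := by linarith [this]
          _ = (c/2) * s := by ring
      rw [abs_div, abs_of_neg hys0, abs_of_pos hpos, div_lt_iff₀ hpos]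
      nlinarith
  -- assemble
  have hhalf : -ε/2 ∈ Ico (-ε) (0:ℝ) := ⟨by linarith, by linarith⟩
  have hTpos : 0 < F (-ε/2) - L := by linarith [hLlt _ hhalf]
  have hTlt : F (-ε/2) - L < -L := by
    have := hFanti _ ⟨le_rfl, hε0⟩ _ hhalf (by linarith)
    rw [hFa] at this; linarith
  refine ⟨F (-ε/2) - L, hTpos, y, hy0, ?_, ?_, ?_⟩
  · intro t ht
    rcases eq_or_lt_of_le ht.1 with h | h
    · rw [← h, hy0]; exact ⟨by linarith, le_rfl⟩
    · have : t ∈ Ioo (0:ℝ) (-L) := ⟨h, lt_of_le_of_lt ht.2 hTlt⟩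
      obtain ⟨hym, -⟩ := hymem t this
      exact ⟨hym.1.le, hym.2.le⟩
  · intro t ht
    rcases eq_or_lt_of_le ht.1 with h | h
    · rw [← h]
      have : g (y 0) = 0 := by rw [hy0, hg0]
      rw [this]; exact hd0
    · exact hyderiv t ⟨h, lt_of_le_of_lt ht.2 hTlt⟩
  · intro t ht
    have : t ∈ Ioo (0:ℝ) (-L) := ⟨ht.1, lt_of_le_of_lt ht.2 hTlt⟩
    exact (hymem t this).1.2
end

section
/- Let R: ℝ × ℝ → ℝ be continuous on [0,1] × (−∞,0] and such that: for each u ∈ [0,1], the map w ↦ R(u,w) is convex and differentiable on (−∞,0]; the map u ↦ R(u,0) is strictly convex on [0,1] with R(0,0) = R(1,0) = 0; and the map χ(u) := ∂R/∂w(u,0) is convex on [0,1] with χ(0) < 0 and χ(1) < 0. Then there exists a unique function w: [0,1] → (−∞,0] such that R(u, w(u)) = 0 for every u ∈ [0,1]; moreover w is continuous, w(0) = w(1) = 0, w(u) < 0 for every u ∈ (0,1), and ∂R/∂w(u, w(u)) ≤ χ(u) < 0 for every u ∈ [0,1]. -/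
/-!
For each `u`, `R u` is convex on `(-∞, 0]` with slope `χ u < 0` at `0` (`χ` is convex, so it is
bounded on `[0,1]` by `max (χ 0) (χ 1) < 0`); hence `R u` is strictly decreasing there, and it is
nonnegative at the point where its tangent line at `0` vanishes, while `R u 0 ≤ 0` by convexity of
`u ↦ R u 0`. The intermediate value theorem then yields exactly one zero `w u ≤ 0`. Strict
monotonicity lets the sign of `R u a` decide on which side of `a` the zero lies, so the joint
continuity of `R` gives the continuity of `w`. Strict convexity makes `R u 0 < 0` for `0 < u < 1`,
forcing `w u < 0`, and the derivative of a convex function is monotone, so `∂R/∂w (u, w u) ≤ χ u`.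
-/

open Set

namespace ConvexOn

variable {S : Set ℝ} {f f' : ℝ → ℝ} {b d : ℝ}

theorem monotoneOn_of_hasDerivWithinAt (hf : ConvexOn ℝ S f)
    (hf' : ∀ x ∈ S, HasDerivWithinAt f (f' x) S x) : MonotoneOn f' S := by
  intro x hx y hy hxy
  rcases hxy.eq_or_lt with rfl | hxy
  · rfl
  exact (hf.le_slope_of_hasDerivWithinAt hx hy hxy (hf' x hx)).trans
    (hf.slope_le_of_hasDerivWithinAt hx hy hxy (hf' y hy))

theorem add_mul_sub_le_of_hasDerivWithinAt (hf : ConvexOn ℝ S f) {x : ℝ} (hx : x ∈ S)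
    (hb : b ∈ S) (hxb : x ≤ b) (hd : HasDerivWithinAt f d S b) : f b + d * (x - b) ≤ f x := by
  rcases hxb.eq_or_lt with rfl | hxb
  · simp
  have hslope := hf.slope_le_of_hasDerivWithinAt hx hb hxb hd
  rw [slope_def_field, div_le_iff₀ (sub_pos.mpr hxb)] at hslope
  linarith

theorem strictAntiOn_Iic_of_hasDerivWithinAt_neg (hf : ConvexOn ℝ (Iic b) f)
    (hd : HasDerivWithinAt f d (Iic b) b) (hd0 : d < 0) : StrictAntiOn f (Iic b) := by
  intro x hx y hy hxy
  have hxb : x < b := hxy.trans_le hy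
  have hslope_b : slope f x b < 0 :=
    (hf.slope_le_of_hasDerivWithinAt hx self_mem_Iic hxb hd).trans_lt hd0
  have hslope_y : slope f x y ≤ slope f x b :=
    hf.slope_mono hx ⟨hy, hxy.ne'⟩ ⟨self_mem_Iic, hxb.ne'⟩ hy
  exact (slope_neg_iff_of_le hxy.le).mp (hslope_y.trans_lt hslope_b)

theorem exists_eq_zero_of_hasDerivWithinAt_neg (hf : ConvexOn ℝ (Iic b) f)
    (hcont : ContinuousOn f (Iic b)) (hd : HasDerivWithinAt f d (Iic b) b) (hd0 : d < 0)
    (hfb : f b ≤ 0) : ∃ x ≤ b, f x = 0 := by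
  -- `x₀` is where the tangent line at `b` vanishes; convexity puts the graph above it.
  set x₀ := b - f b / d
  have hx₀b : x₀ ≤ b := sub_le_self _ (div_nonneg_of_nonpos hfb hd0.le)
  have hfx₀ : 0 ≤ f x₀ := by
    have := hf.add_mul_sub_le_of_hasDerivWithinAt hx₀b self_mem_Iic hx₀b hd
    rwa [sub_sub_cancel_left, mul_neg, mul_div_cancel₀ _ hd0.ne, add_neg_cancel] at this
  obtain ⟨x, hx, hfx⟩ := intermediate_value_Icc' hx₀b (hcont.mono Icc_subset_Iic_self)
    ⟨hfb, hfx₀⟩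
  exact ⟨x, hx.2, hfx⟩

end ConvexOn

theorem continuousOn_of_strictAntiOn_of_apply_eq_zero {X : Type*} [TopologicalSpace X]
    {S : Set X} {F : X → ℝ → ℝ} {w : X → ℝ} {c : ℝ}
    (hF : ∀ u ∈ S, StrictAntiOn (F u) (Iic c))
    (hFc : ∀ a ≤ c, ContinuousOn (fun u => F u a) S)
    (hw : ∀ u ∈ S, w u ≤ c ∧ F u (w u) = 0) : ContinuousOn w S := by
  have lt_iff_pos : ∀ u ∈ S, ∀ a ≤ c, a < w u ↔ 0 < F u a := fun u hu a ha => by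
    rw [← (hw u hu).2, (hF u hu).lt_iff_gt (hw u hu).1 ha]
  have gt_iff_neg : ∀ u ∈ S, ∀ a ≤ c, w u < a ↔ F u a < 0 := fun u hu a ha => by
    rw [← (hw u hu).2, (hF u hu).lt_iff_gt ha (hw u hu).1]
  intro u₀ hu₀
  refine tendsto_order.2 ⟨fun a ha => ?_, fun a ha => ?_⟩
  · have hac : a ≤ c := ha.le.trans (hw u₀ hu₀).1
    filter_upwards [hFc a hac u₀ hu₀ (Ioi_mem_nhds ((lt_iff_pos u₀ hu₀ a hac).1 ha)),
      self_mem_nhdsWithin] with u hpos hu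
    exact (lt_iff_pos u hu a hac).2 hpos
  · rcases le_or_gt a c with hac | hca
    · filter_upwards [hFc a hac u₀ hu₀ (Iio_mem_nhds ((gt_iff_neg u₀ hu₀ a hac).1 ha)),
        self_mem_nhdsWithin] with u hneg hu
      exact (gt_iff_neg u hu a hac).2 hneg
    · filter_upwards [self_mem_nhdsWithin] with u hu
      exact (hw u hu).1.trans_lt hca

/-- existence, uniqueness and properties of the curve `u ↦ w(u)` of
zeros of `R(u,·)` on `[0,1]` (Lemma 3.2 of the paper restricted to `[0,1]`).
Here `Rw u w` denotes the partial derivative `∂R/∂w(u,w)` on `(−∞,0]`, and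
`χ(u) = Rw u 0`. -/
theorem exists_unique_zero_curve (R Rw : ℝ → ℝ → ℝ)
    (hcont : ContinuousOn (Function.uncurry R) (Icc (0 : ℝ) 1 ×ˢ Iic (0 : ℝ)))
    (hconv : ∀ u ∈ Icc (0 : ℝ) 1, ConvexOn ℝ (Iic (0 : ℝ)) (R u))
    (hdiff : ∀ u ∈ Icc (0 : ℝ) 1, ∀ v ∈ Iic (0 : ℝ),
      HasDerivWithinAt (R u) (Rw u v) (Iic (0 : ℝ)) v)
    (hstrict : StrictConvexOn ℝ (Icc (0 : ℝ) 1) (fun u => R u 0))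
    (hR00 : R 0 0 = 0) (hR10 : R 1 0 = 0)
    (hχconv : ConvexOn ℝ (Icc (0 : ℝ) 1) (fun u => Rw u 0))
    (hχ0 : Rw 0 0 < 0) (hχ1 : Rw 1 0 < 0) :
    ∃ w : ℝ → ℝ,
      (∀ u ∈ Icc (0 : ℝ) 1, w u ≤ 0 ∧ R u (w u) = 0) ∧
      (∀ w' : ℝ → ℝ, (∀ u ∈ Icc (0 : ℝ) 1, w' u ≤ 0 ∧ R u (w' u) = 0) →
        ∀ u ∈ Icc (0 : ℝ) 1, w' u = w u) ∧
      ContinuousOn w (Icc (0 : ℝ) 1) ∧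
      w 0 = 0 ∧ w 1 = 0 ∧
      (∀ u ∈ Ioo (0 : ℝ) 1, w u < 0) ∧
      (∀ u ∈ Icc (0 : ℝ) 1, Rw u (w u) ≤ Rw u 0 ∧ Rw u 0 < 0) := by
  have h0 : (0 : ℝ) ∈ Icc (0 : ℝ) 1 := left_mem_Icc.2 zero_le_one
  have h1 : (1 : ℝ) ∈ Icc (0 : ℝ) 1 := right_mem_Icc.2 zero_le_one
  have hseg : segment ℝ (0 : ℝ) 1 = Icc 0 1 := segment_eq_Icc zero_le_one
  have hχ : ∀ u ∈ Icc (0 : ℝ) 1, Rw u 0 < 0 := fun u hu =>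
    (hχconv.le_on_segment h0 h1 (hseg ▸ hu)).trans_lt (max_lt hχ0 hχ1)
  have hR0 : ∀ u ∈ Icc (0 : ℝ) 1, R u 0 ≤ 0 := fun u hu => by
    simpa [hR00, hR10] using hstrict.convexOn.le_on_segment h0 h1 (hseg ▸ hu)
  have hanti : ∀ u ∈ Icc (0 : ℝ) 1, StrictAntiOn (R u) (Iic 0) := fun u hu =>
    (hconv u hu).strictAntiOn_Iic_of_hasDerivWithinAt_neg (hdiff u hu 0 self_mem_Iic) (hχ u hu)
  have hex : ∀ u ∈ Icc (0 : ℝ) 1, ∃ v ≤ 0, R u v = 0 := fun u hu =>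
    (hconv u hu).exists_eq_zero_of_hasDerivWithinAt_neg (hcont.uncurry_left u hu)
      (hdiff u hu 0 self_mem_Iic) (hχ u hu) (hR0 u hu)
  choose! w hw0 hwR using hex
  have huniq : ∀ u ∈ Icc (0 : ℝ) 1, ∀ v ≤ 0, R u v = 0 → v = w u := fun u hu v hv hRv =>
    (hanti u hu).injOn hv (hw0 u hu) (hRv.trans (hwR u hu).symm)
  refine ⟨w, fun u hu => ⟨hw0 u hu, hwR u hu⟩,
    fun w' hw' u hu => huniq u hu _ (hw' u hu).1 (hw' u hu).2,
    continuousOn_of_strictAntiOn_of_apply_eq_zero hanti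
      (fun a ha => hcont.uncurry_right a ha) fun u hu => ⟨hw0 u hu, hwR u hu⟩,
    (huniq 0 h0 0 le_rfl hR00).symm, (huniq 1 h1 0 le_rfl hR10).symm, fun u hu => ?_,
    fun u hu => ⟨(hconv u hu).monotoneOn_of_hasDerivWithinAt (hdiff u hu) (hw0 u hu)
      self_mem_Iic (hw0 u hu), hχ u hu⟩⟩
  have hRu0 : R u 0 < 0 := by
    simpa [hR00, hR10] using hstrict.lt_on_openSegment h0 h1 zero_ne_one
      (by rwa [openSegment_eq_Ioo zero_lt_one])
  exact (hw0 u (Ioo_subset_Icc_self hu)).lt_of_ne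
    fun h => hRu0.ne (h ▸ hwR u (Ioo_subset_Icc_self hu))
end

section
/- Let g: ℝ → ℝ be convex and differentiable, and assume g is either strictly convex or affine. Suppose g(w*) = 0 and g'(w*) < 0 for some w* ∈ ℝ, and assume additionally that g(0) < 0 whenever w* < 0. Then g has at most one zero w̃ distinct from w*, and any such zero satisfies w̃ > max(0, w*) and g'(w̃) > 0. -/
open Set

/-- Lemma 3.3(b) of the paper: a convex differentiable function `g`
that is either strictly convex or affine, with a stable zero `w*` (`g(w*) = 0`,
`g'(w*) < 0`) and `g(0) < 0` whenever `w* < 0`, has at most one further zero `w̃`;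
any such zero satisfies `w̃ > max(0, w*)` and `g'(w̃) > 0`. -/
theorem second_equilibrium_unstable (g : ℝ → ℝ) (hdiff : Differentiable ℝ g)
    (hconv : ConvexOn ℝ univ g)
    (halt : StrictConvexOn ℝ univ g ∨ ∃ a b : ℝ, ∀ x, g x = a * x + b)
    (wstar : ℝ) (hzero : g wstar = 0) (hderiv : deriv g wstar < 0)
    (h0 : wstar < 0 → g 0 < 0) :
    (∀ w₁ w₂ : ℝ, g w₁ = 0 → g w₂ = 0 → w₁ ≠ wstar → w₂ ≠ wstar → w₁ = w₂) ∧
    (∀ w : ℝ, g w = 0 → w ≠ wstar → w > max 0 wstar ∧ deriv g w > 0) := by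
  rcases halt with hstrict | ⟨a, b, hab⟩
  · -- strictly convex case
    -- any zero distinct from wstar lies strictly to the right of wstar
    have key : ∀ w : ℝ, g w = 0 → w ≠ wstar → wstar < w := by
      intro w hw hne
      by_contra h
      push_neg at h
      have hlt : w < wstar := lt_of_le_of_ne h hne
      have hs := hconv.slope_le_deriv (mem_univ w) (mem_univ wstar) hlt (hdiff wstar)
      rw [slope_def_field, hw, hzero] at hs
      simp at hs
      linarith
    have keypos : ∀ w : ℝ, g w = 0 → w ≠ wstar → 0 < w := by
      intro w hw hne
      have hws := key w hw hne
      rcases lt_or_ge wstar 0 with hneg | hpos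
      · have hg0 : g 0 < 0 := h0 hneg
        by_contra h
        push_neg at h
        rcases eq_or_lt_of_le h with h0' | h0'
        · rw [← h0', hw] at hg0; linarith
        · -- wstar < w < 0 : secant monotonicity
          have hsec := hconv.secant_mono (a := wstar) (x := w) (y := (0:ℝ))
            (mem_univ _) (mem_univ _) (mem_univ _) hne (ne_of_gt hneg) h
          rw [hw, hzero] at hsec
          have h1 : (0:ℝ) - 0 = 0 := by ring
          rw [h1] at hsec
          simp at hsec
          have h2 : g 0 / -wstar < 0 :=
            div_neg_of_neg_of_pos hg0 (by linarith)
          linarith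
      · linarith
    have keyderiv : ∀ w : ℝ, g w = 0 → w ≠ wstar → 0 < deriv g w := by
      intro w hw hne
      have hws := key w hw hne
      have hs := hstrict.slope_lt_deriv (mem_univ wstar) (mem_univ w) hws (hdiff w)
      rw [slope_def_field, hw, hzero] at hs
      simpa using hs
    constructor
    · intro w₁ w₂ h₁ h₂ hn₁ hn₂
      by_contra hne
      -- wlog w₁ < w₂
      rcases lt_or_gt_of_ne hne with hlt | hlt
      · have := hstrict.slope_lt_deriv (mem_univ w₁) (mem_univ w₂) hlt (hdiff w₂)
        have := hstrict.deriv_lt_slope (mem_univ w₁) (mem_univ w₂) hlt (hdiff w₁)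
        -- slope = 0, so deriv g w₁ < 0 < deriv g w₂, but also deriv g w₁ > 0
        rw [slope_def_field, h₁, h₂] at this
        simp at this
        have := keyderiv w₁ h₁ hn₁
        linarith
      · have hderiv1 := hstrict.deriv_lt_slope (mem_univ w₂) (mem_univ w₁) hlt (hdiff w₂)
        rw [slope_def_field, h₁, h₂] at hderiv1
        simp at hderiv1
        have := keyderiv w₂ h₂ hn₂
        linarith
    · intro w hw hne
      exact ⟨max_lt (keypos w hw hne) (key w hw hne), keyderiv w hw hne⟩
  · -- affine case: g x = a x + b, slope a = deriv g wstar < 0, unique zero wstar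
    have hg : g = fun x => a * x + b := funext hab
    have hda : ∀ x : ℝ, deriv g x = a := by
      intro x
      rw [hg]
      have : HasDerivAt (fun x : ℝ => a * x + b) (a * 1) x :=
        ((hasDerivAt_id x).const_mul a).add_const b
      simpa using this.deriv
    have ha : a < 0 := by rw [hda wstar] at hderiv; exact hderiv
    have uniq : ∀ w : ℝ, g w = 0 → w = wstar := by
      intro w hw
      have h1 : a * w + b = 0 := by rw [← hab]; exact hw
      have h2 : a * wstar + b = 0 := by rw [← hab]; exact hzero
      have : a * (w - wstar) = 0 := by ring_nf; linarith
      have := mul_eq_zero.mp this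
      rcases this with h | h
      · exact absurd h (ne_of_lt ha)
      · linarith
    constructor
    · intro w₁ w₂ h₁ h₂ hn₁ hn₂
      exact absurd (uniq w₁ h₁) hn₁
    · intro w hw hne
      exact absurd (uniq w hw) hne
end

section
/- Let w* ∈ ℝ with w* ≠ 0, let J be the closed interval with endpoints 0 and w*, and let g: J → ℝ be continuous with g(w*) = 0 and (w* − x)·g(x) > 0 for every x ∈ J ∖ {w*}. Then: (i) there exists a differentiable function y: [0,∞) → J with y(0) = 0 and y'(t) = g(y(t)) for all t ≥ 0; (ii) every such function y is monotone (nondecreasing if w* > 0, nonincreasing if w* < 0) and satisfies lim_{t→∞} y(t) = w*; and (iii) for every such y and every continuous f: J → ℝ, lim_{t→∞} (1/t)∫₀ᵗ f(y(s)) ds = f(w*). -/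
/-!
Separation of variables: on `[0, w)` the map `x ↦ ∫₀ˣ 1/g` is a strictly increasing time
change whose inverse solves `y' = g(y)`; if it reaches the equilibrium `w` in finite time it is
frozen there, and the junction is harmless because `g ∘ y` is continuous with `g w = 0`. Every
solution is monotone since `g` has the sign of `w - x`, and it cannot stall below `w` because `g`
is bounded away from zero on compact subintervals of `[0, w)`; hence `y → w`, and the time
averages of `f ∘ y` converge by the Cesàro argument. The case `w < 0` follows by the reflection
`x ↦ -x`.
-/

open Set Filter MeasureTheory intervalIntegral

/-- A solution of the autonomous ODE `y' = g(y)`, `y(0) = 0`, with values in the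
closed interval `J` with endpoints `0` and `w*`. -/
def IsSolutionTo (g : ℝ → ℝ) (wstar : ℝ) (y : ℝ → ℝ) : Prop :=
  y 0 = 0 ∧ (∀ t : ℝ, 0 ≤ t → y t ∈ uIcc (0 : ℝ) wstar) ∧
    ∀ t : ℝ, 0 ≤ t → HasDerivWithinAt y (g (y t)) (Ici 0) t

open Topology

section UpperInverse

variable {T : ℝ → ℝ} {w t x : ℝ}

/-- The inverse of `T` on `Iio w`, continued by the constant `w` once `t` exceeds the range of
`T` on `Iio w`. -/
noncomputable def upperInverse (T : ℝ → ℝ) (w t : ℝ) : ℝ :=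
  sSup {x | x < w ∧ T x ≤ t}

lemma nonempty_upperInverse_set (hbot : Tendsto T atBot atBot) (t : ℝ) :
    {x | x < w ∧ T x ≤ t}.Nonempty :=
  ((eventually_lt_atBot w).and (hbot.eventually (eventually_le_atBot t))).exists

lemma upperInverse_le (hbot : Tendsto T atBot atBot) (t : ℝ) : upperInverse T w t ≤ w :=
  csSup_le (nonempty_upperInverse_set hbot t) fun _ hx => hx.1.le

lemma monotone_upperInverse (hbot : Tendsto T atBot atBot) : Monotone (upperInverse T w) :=
  fun s _ hst => csSup_le_csSup ⟨w, fun _ hx => hx.1.le⟩ (nonempty_upperInverse_set hbot s)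
    fun _ hx => ⟨hx.1, hx.2.trans hst⟩

lemma upperInverse_apply (hmono : StrictMonoOn T (Iio w)) (hx : x < w) :
    upperInverse T w (T x) = x :=
  IsGreatest.csSup_eq ⟨⟨hx, le_rfl⟩, fun _ ha => (hmono.le_iff_le ha.1 hx).1 ha.2⟩

lemma upperInverse_eq_right (h : ∀ x < w, T x ≤ t) : upperInverse T w t = w := by
  have hset : {x | x < w ∧ T x ≤ t} = Iio w :=
    Set.ext fun x => ⟨And.left, fun hx => ⟨hx, h x hx⟩⟩
  rw [upperInverse, hset, csSup_Iio]

lemma apply_upperInverse (hT : ContinuousOn T (Iio w)) (hmono : StrictMonoOn T (Iio w))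
    (hbot : Tendsto T atBot atBot) (ht : upperInverse T w t < w) : T (upperInverse T w t) = t := by
  obtain ⟨x₀, hx₀, htx₀⟩ : ∃ x₀ < w, t < T x₀ := by
    by_contra! h
    exact ht.ne (upperInverse_eq_right h)
  obtain ⟨x₁, hx₁, hx₁t⟩ :=
    ((eventually_le_atBot x₀).and (hbot.eventually (eventually_le_atBot t))).exists
  obtain ⟨x, hx, rfl⟩ := intermediate_value_Icc hx₁
    (hT.mono fun z hz => hz.2.trans_lt hx₀) ⟨hx₁t, htx₀.le⟩
  rw [upperInverse_apply hmono (hx.2.trans_lt hx₀)]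

lemma continuous_upperInverse (hmono : StrictMonoOn T (Iio w)) (hbot : Tendsto T atBot atBot) :
    Continuous (upperInverse T w) := by
  have hrange : Iio w ⊆ range (upperInverse T w) := fun x hx =>
    ⟨T x, upperInverse_apply hmono hx⟩
  have hmono' := (monotone_upperInverse (w := w) hbot).monotoneOn univ
  refine continuous_iff_continuousAt.2 fun t => ?_
  rcases (upperInverse_le hbot t).lt_or_eq with hlt | heq
  · refine continuousAt_of_monotoneOn_of_image_mem_nhds hmono' univ_mem ?_
    rw [image_univ]
    exact mem_of_superset (Iio_mem_nhds hlt) hrange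
  · have hright : ∀ s ≥ t, upperInverse T w s = w := fun s hs =>
      le_antisymm (upperInverse_le hbot s) (heq.symm.trans_le (monotone_upperInverse hbot hs))
    refine continuousAt_iff_continuous_left_right.2 ⟨?_, ?_⟩
    · refine continuousWithinAt_left_of_monotoneOn_of_image_mem_nhdsWithin hmono' univ_mem ?_
      rw [image_univ, heq]
      refine mem_of_superset self_mem_nhdsWithin fun x hx => ?_
      rcases (mem_Iic.1 hx).lt_or_eq with hxw | rfl
      exacts [hrange hxw, ⟨t, heq⟩]
    · exact continuousWithinAt_const.congr (fun s hs => hright s hs) (hright t le_rfl)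

lemma hasDerivAt_upperInverse (hT : ContinuousOn T (Iio w)) (hmono : StrictMonoOn T (Iio w))
    (hbot : Tendsto T atBot atBot) {T' : ℝ} (hT' : HasDerivAt T T' (upperInverse T w t))
    (hT'0 : T' ≠ 0) (ht : upperInverse T w t < w) :
    HasDerivAt (upperInverse T w) T'⁻¹ t := by
  have hcont := (continuous_upperInverse hmono hbot).continuousAt (x := t)
  refine HasDerivAt.of_local_left_inverse hcont hT' hT'0 ?_
  filter_upwards [hcont.eventually (Iio_mem_nhds ht)] with s hs
  exact apply_upperInverse hT hmono hbot hs

end UpperInverse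

section SeparationOfVariables

variable {G : ℝ → ℝ} {w : ℝ}

lemma hasDerivAt_integral_inv (hw : 0 < w) (hG : Continuous G) (hpos : ∀ x < w, 0 < G x)
    {x : ℝ} (hx : x < w) :
    HasDerivAt (fun x => ∫ s in (0 : ℝ)..x, (G s)⁻¹) (G x)⁻¹ x := by
  have hinv : ContinuousOn (fun s => (G s)⁻¹) (Iio w) :=
    hG.continuousOn.inv₀ fun s hs => (hpos s hs).ne'
  exact integral_hasDerivAt_right
    ((hinv.mono fun s hs => hs.2.trans_lt (max_lt hw hx)).intervalIntegrable)
    (hinv.stronglyMeasurableAtFilter isOpen_Iio x hx) (hinv.continuousAt (Iio_mem_nhds hx))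

theorem exists_monotone_hasDerivAt (hw : 0 < w) (hG : Continuous G) (hpos : ∀ x < w, 0 < G x)
    (hGw : G w = 0) (hG0 : ∀ x ≤ 0, G x = G 0) :
    ∃ u : ℝ → ℝ, u 0 = 0 ∧ Monotone u ∧ (∀ t, u t ≤ w) ∧
      ∀ t, HasDerivAt u (G (u t)) t := by
  set T : ℝ → ℝ := fun x => ∫ s in (0 : ℝ)..x, (G s)⁻¹
  have hT' : ∀ x < w, HasDerivAt T (G x)⁻¹ x := fun x => hasDerivAt_integral_inv hw hG hpos
  have hTc : ContinuousOn T (Iio w) := fun x hx => (hT' x hx).continuousAt.continuousWithinAt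
  have hTmono : StrictMonoOn T (Iio w) := by
    refine strictMonoOn_of_hasDerivWithinAt_pos (f' := fun x => (G x)⁻¹) (convex_Iio w) hTc
      (fun x hx => ?_) fun x hx => ?_
    all_goals rw [interior_Iio] at hx
    exacts [(hT' x hx).hasDerivWithinAt, inv_pos.2 (hpos x hx)]
  have hTbot : Tendsto T atBot atBot := by
    refine (tendsto_id.atBot_mul_const (inv_pos.2 (hpos 0 hw))).congr' ?_
    filter_upwards [eventually_le_atBot 0] with x hx
    have hconst : EqOn (fun s => (G s)⁻¹) (fun _ => (G 0)⁻¹) (uIcc 0 x) := fun s hs => by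
      rw [uIcc_of_ge hx] at hs
      simp only [hG0 s hs.2]
    simp [T, integral_congr hconst]
  set u := upperInverse T w
  have hle : ∀ t, u t ≤ w := upperInverse_le hTbot
  have hmono : Monotone u := monotone_upperInverse hTbot
  have hder_lt : ∀ t, u t < w → HasDerivAt u (G (u t)) t := fun t ht => by
    simpa using hasDerivAt_upperInverse hTc hTmono hTbot (hT' _ ht)
      (inv_ne_zero (hpos _ ht).ne') ht
  have hder_after : ∀ t, (∃ r < t, u r = w) → HasDerivAt u (G (u t)) t := by
    rintro t ⟨r, hrt, hr⟩
    have hev : u =ᶠ[𝓝 t] fun _ => w := by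
      filter_upwards [Ioi_mem_nhds hrt] with s hs
      exact le_antisymm (hle s) (hr.symm.trans_le (hmono hs.le))
    rw [hev.eq_of_nhds, hGw]
    exact (hasDerivAt_const t w).congr_of_eventuallyEq hev
  refine ⟨u, ?_, hmono, hle, fun t => ?_⟩
  · simpa [T] using upperInverse_apply hTmono hw
  by_cases hreached : ∃ r < t, u r = w
  · exact hder_after t hreached
  rcases (hle t).lt_or_eq with hlt | heq
  · exact hder_lt t hlt
  -- `t` is the first time at which `u` reaches `w`
  have hu := continuous_upperInverse hTmono hTbot
  refine hasDerivAt_of_hasDerivAt_of_ne (fun s hs => ?_) hu.continuousAt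
    (hG.comp hu).continuousAt
  rcases hs.lt_or_gt with hst | hts
  · exact hder_lt s ((hle s).lt_of_ne fun h => hreached ⟨s, hst, h⟩)
  · exact hder_after s ⟨t, hts, heq⟩

end SeparationOfVariables

lemma monotoneOn_Ici_of_hasDerivWithinAt_nonneg {f f' : ℝ → ℝ} {a : ℝ}
    (hf : ∀ t ≥ a, HasDerivWithinAt f (f' t) (Ici a) t) (hf' : ∀ t ≥ a, 0 ≤ f' t) :
    MonotoneOn f (Ici a) := by
  refine monotoneOn_of_hasDerivWithinAt_nonneg (f' := f') (convex_Ici a)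
    (fun t ht => (hf t ht).continuousWithinAt) (fun t ht => ?_) fun t ht => ?_
  all_goals rw [interior_Ici] at ht
  exacts [(hf t (le_of_lt ht)).mono interior_subset, hf' t (le_of_lt ht)]

section PositiveEquilibrium

variable {g y : ℝ → ℝ} {w : ℝ}

theorem exists_isSolutionTo_of_pos (hw : 0 < w) (hg : ContinuousOn g (Icc 0 w)) (hgw : g w = 0)
    (hpos : ∀ x ∈ Ico 0 w, 0 < g x) : ∃ y, IsSolutionTo g w y := by
  set G : ℝ → ℝ := fun x => g (projIcc 0 w hw.le x)
  have hGg : ∀ x ∈ Icc 0 w, G x = g x := fun x hx => by simp [G, projIcc_of_mem _ hx]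
  have hG0 : ∀ x ≤ 0, G x = g 0 := fun x hx => by simp [G, projIcc_of_le_left _ hx]
  obtain ⟨u, hu0, hmono, hle, hder⟩ := exists_monotone_hasDerivAt (G := G) hw
    (hg.comp_continuous (continuous_subtype_val.comp continuous_projIcc) fun x =>
      (projIcc _ _ _ x).2)
    (fun x hx => by
      rcases le_total x 0 with hx0 | hx0
      · rw [hG0 x hx0]; exact hpos 0 ⟨le_rfl, hw⟩
      · rw [hGg x ⟨hx0, hx.le⟩]; exact hpos x ⟨hx0, hx⟩)
    (by rw [hGg w (right_mem_Icc.2 hw.le), hgw])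
    (fun x hx => by rw [hG0 x hx, hG0 0 le_rfl])
  have hmem : ∀ t ≥ 0, u t ∈ Icc 0 w := fun t ht => ⟨hu0 ▸ hmono ht, hle t⟩
  refine ⟨u, hu0, fun t ht => uIcc_of_le hw.le ▸ hmem t ht, fun t ht => ?_⟩
  rw [← hGg _ (hmem t ht)]
  exact (hder t).hasDerivWithinAt

lemma monotoneOn_ode_solution (hgw : g w = 0) (hpos : ∀ x ∈ Ico 0 w, 0 < g x)
    (hmem : ∀ t ≥ 0, y t ∈ Icc 0 w)
    (hder : ∀ t ≥ 0, HasDerivWithinAt y (g (y t)) (Ici 0) t) : MonotoneOn y (Ici 0) := by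
  refine monotoneOn_Ici_of_hasDerivWithinAt_nonneg hder fun t ht => ?_
  rcases (hmem t ht).2.lt_or_eq with hlt | heq
  · exact (hpos _ ⟨(hmem t ht).1, hlt⟩).le
  · rw [heq, hgw]

lemma exists_lt_ode_solution (hg : ContinuousOn g (Icc 0 w))
    (hpos : ∀ x ∈ Ico 0 w, 0 < g x) (hmem : ∀ t ≥ 0, y t ∈ Icc 0 w)
    (hder : ∀ t ≥ 0, HasDerivWithinAt y (g (y t)) (Ici 0) t) {x : ℝ} (hx : x < w) :
    ∃ t ≥ 0, x < y t := by
  by_contra! hbelow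
  have hx0 : 0 ≤ x := (hmem 0 le_rfl).1.trans (hbelow 0 le_rfl)
  obtain ⟨z, hz, hzmin⟩ := isCompact_Icc.exists_isMinOn (nonempty_Icc.2 hx0)
    (hg.mono (Icc_subset_Icc_right hx.le))
  have hm : 0 < g z := hpos z ⟨hz.1, hz.2.trans_lt hx⟩
  have hlin : MonotoneOn (fun t => y t - g z * t) (Ici 0) := by
    refine monotoneOn_Ici_of_hasDerivWithinAt_nonneg
      (fun t ht => (hder t ht).sub ((hasDerivWithinAt_id t _).const_mul (g z))) fun t ht => ?_
    simpa using hzmin ⟨(hmem t ht).1, hbelow t ht⟩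
  have ht : 0 ≤ (x + 1) / g z := by positivity
  have := hlin self_mem_Ici ht ht
  simp only [mul_zero, sub_zero, mul_div_cancel₀ _ hm.ne'] at this
  linarith [(hmem 0 le_rfl).1, hbelow _ ht]

lemma tendsto_ode_solution (hg : ContinuousOn g (Icc 0 w)) (hgw : g w = 0)
    (hpos : ∀ x ∈ Ico 0 w, 0 < g x) (hmem : ∀ t ≥ 0, y t ∈ Icc 0 w)
    (hder : ∀ t ≥ 0, HasDerivWithinAt y (g (y t)) (Ici 0) t) : Tendsto y atTop (𝓝 w) := by
  refine tendsto_order.2 ⟨fun x hx => ?_, fun x hx => ?_⟩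
  · obtain ⟨t₀, ht₀, hxt₀⟩ := exists_lt_ode_solution hg hpos hmem hder hx
    filter_upwards [eventually_ge_atTop t₀] with t ht
    exact hxt₀.trans_le (monotoneOn_ode_solution hgw hpos hmem hder ht₀ (ht₀.trans ht) ht)
  · filter_upwards [eventually_ge_atTop 0] with t ht
    exact (hmem t ht).2.trans_lt hx

end PositiveEquilibrium

theorem tendsto_average_integral_of_tendsto {h : ℝ → ℝ} {l : ℝ}
    (hc : ContinuousOn h (Ici 0)) (hl : Tendsto h atTop (𝓝 l)) :
    Tendsto (fun t => (1 / t) * ∫ s in (0 : ℝ)..t, h s) atTop (𝓝 l) := by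
  have hint : ∀ a b, 0 ≤ a → 0 ≤ b → IntervalIntegrable h volume a b := fun a b ha hb =>
    (hc.mono fun s hs => (le_min ha hb).trans hs.1).intervalIntegrable
  rw [Metric.tendsto_nhds]
  intro ε hε
  obtain ⟨T, hT⟩ := eventually_atTop.1 ((Metric.tendsto_nhds.1 hl) (ε / 2) (half_pos hε))
  set T₀ := max T 0
  set C := (∫ s in (0 : ℝ)..T₀, h s) - T₀ * l
  have hC : Tendsto (fun t : ℝ => C / t) atTop (𝓝 0) := tendsto_const_nhds.div_atTop tendsto_id
  filter_upwards [(Metric.tendsto_nhds.1 hC) (ε / 2) (half_pos hε), eventually_gt_atTop T₀]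
    with t hCt htT
  have ht : 0 < t := (le_max_right T 0).trans_lt htT
  have htail : ‖∫ s in T₀..t, (h s - l)‖ ≤ ε / 2 * |t - T₀| :=
    norm_integral_le_of_norm_le_const fun s hs =>
      (hT s ((le_max_left T 0).trans (uIoc_of_le htT.le ▸ hs).1.le)).le
  have hsplit : (1 / t) * (∫ s in (0 : ℝ)..t, h s) - l =
      C / t + (1 / t) * ∫ s in T₀..t, (h s - l) := by
    rw [← integral_add_adjacent_intervals (hint 0 T₀ le_rfl (le_max_right T 0))
      (hint T₀ t (le_max_right T 0) ht.le), integral_sub (hint T₀ t (le_max_right T 0) ht.le)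
      intervalIntegrable_const, intervalIntegral.integral_const, smul_eq_mul]
    field_simp
    ring
  rw [Real.dist_eq, hsplit]
  rw [Real.dist_eq, sub_zero] at hCt
  calc |C / t + (1 / t) * ∫ s in T₀..t, (h s - l)|
      ≤ |C / t| + (1 / t) * |∫ s in T₀..t, (h s - l)| := by
        rw [← abs_of_pos (one_div_pos.2 ht), ← abs_mul, abs_of_pos (one_div_pos.2 ht)]
        exact abs_add_le _ _
    _ ≤ |C / t| + (1 / t) * (ε / 2 * t) := by
        gcongr
        rw [Real.norm_eq_abs, abs_of_pos (sub_pos.2 htT)] at htail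
        nlinarith [le_max_right T 0]
    _ = |C / t| + ε / 2 := by field_simp
    _ < ε := by linarith

theorem IsSolutionTo.tendsto_average {g y : ℝ → ℝ} {w : ℝ} (hy : IsSolutionTo g w y)
    (hlim : Tendsto y atTop (𝓝 w)) {f : ℝ → ℝ} (hf : ContinuousOn f (uIcc 0 w)) :
    Tendsto (fun t => (1 / t) * ∫ s in (0 : ℝ)..t, f (y s)) atTop (𝓝 (f w)) := by
  obtain ⟨-, hmem, hder⟩ := hy
  refine tendsto_average_integral_of_tendsto
    (hf.comp (fun t ht => (hder t ht).continuousWithinAt) fun t ht => hmem t ht) ?_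
  refine (hf w right_mem_uIcc).tendsto.comp (tendsto_nhdsWithin_iff.2 ⟨hlim, ?_⟩)
  filter_upwards [eventually_ge_atTop 0] with t ht
  exact hmem t ht

lemma IsSolutionTo.neg {g y : ℝ → ℝ} {w : ℝ} (hy : IsSolutionTo g w y) :
    IsSolutionTo (fun x => -g (-x)) (-w) (fun t => -y t) := by
  obtain ⟨h0, hmem, hder⟩ := hy
  refine ⟨by simp [h0], fun t ht => ?_, fun t ht => ?_⟩
  · simpa [mem_uIcc, or_comm, and_comm] using hmem t ht
  · show HasDerivWithinAt (fun t => -y t) (-g (- -y t)) (Ici 0) t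
    rw [neg_neg]
    exact (hder t ht).neg

structure IsStableZero (g : ℝ → ℝ) (w : ℝ) : Prop where
  continuousOn : ContinuousOn g (uIcc 0 w)
  apply_eq_zero : g w = 0
  sign : ∀ x ∈ uIcc 0 w \ {w}, (w - x) * g x > 0

namespace IsStableZero

variable {g y : ℝ → ℝ} {w : ℝ}

lemma neg (h : IsStableZero g w) : IsStableZero (fun x => -g (-x)) (-w) := by
  have hmem : ∀ {x}, x ∈ uIcc 0 (-w) → -x ∈ uIcc 0 w := fun hx => by
    simpa [mem_uIcc, neg_le, le_neg, or_comm, and_comm] using hx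
  refine ⟨(h.continuousOn.comp continuous_neg.continuousOn fun x hx => hmem hx).neg,
    by simp [h.apply_eq_zero], fun x hx => ?_⟩
  have := h.sign (-x) ⟨hmem hx.1, fun hxw => hx.2 (neg_eq_iff_eq_neg.1 hxw)⟩
  linarith

lemma pos_on_Ico (h : IsStableZero g w) (hw : 0 < w) : ∀ x ∈ Ico 0 w, 0 < g x := fun x hx =>
  pos_of_mul_pos_right (h.sign x ⟨uIcc_of_le hw.le ▸ Ico_subset_Icc_self hx, hx.2.ne⟩)
    (sub_pos.2 hx.2).le

lemma exists_isSolutionTo (h : IsStableZero g w) (hw : w ≠ 0) : ∃ y, IsSolutionTo g w y := by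
  have hpos_case : ∀ {g : ℝ → ℝ} {w : ℝ}, IsStableZero g w → 0 < w →
      ∃ y, IsSolutionTo g w y := fun h hw =>
    exists_isSolutionTo_of_pos hw (uIcc_of_le hw.le ▸ h.continuousOn) h.apply_eq_zero
      (h.pos_on_Ico hw)
  rcases hw.lt_or_gt with hneg | hpos
  · obtain ⟨y, hy⟩ := hpos_case h.neg (neg_pos.2 hneg)
    exact ⟨_, by simpa using hy.neg⟩
  · exact hpos_case h hpos

lemma monotoneOn_and_tendsto_of_pos (h : IsStableZero g w) (hw : 0 < w)
    (hy : IsSolutionTo g w y) : MonotoneOn y (Ici 0) ∧ Tendsto y atTop (𝓝 w) := by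
  obtain ⟨-, hmem, hder⟩ := hy
  simp only [uIcc_of_le hw.le] at hmem
  exact ⟨monotoneOn_ode_solution h.apply_eq_zero (h.pos_on_Ico hw) hmem hder,
    tendsto_ode_solution (uIcc_of_le hw.le ▸ h.continuousOn) h.apply_eq_zero
      (h.pos_on_Ico hw) hmem hder⟩

lemma antitoneOn_and_tendsto_of_neg (h : IsStableZero g w) (hw : w < 0)
    (hy : IsSolutionTo g w y) : AntitoneOn y (Ici 0) ∧ Tendsto y atTop (𝓝 w) := by
  obtain ⟨hmono, hlim⟩ := h.neg.monotoneOn_and_tendsto_of_pos (neg_pos.2 hw) hy.neg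
  exact ⟨fun a ha b hb hab => neg_le_neg_iff.1 (hmono ha hb hab), by simpa using hlim.neg⟩

end IsStableZero

/-- ODE content of Theorem 3.4: for `g` continuous on the interval `J`
between `0` and `w* ≠ 0` with `g(w*) = 0` and `(w* − x)·g(x) > 0` on `J ∖ {w*}`, the
ODE `y' = g(y)`, `y(0)=0` has a solution in `J`; every solution is monotone towards
`w*`, converges to `w*`, and time-averages of `f(y(·))` converge to `f(w*)`. -/
theorem ode_converges_to_stable_zero (wstar : ℝ) (hw : wstar ≠ 0) (g : ℝ → ℝ)
    (hg : ContinuousOn g (uIcc (0 : ℝ) wstar)) (hgw : g wstar = 0)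
    (hsign : ∀ x ∈ uIcc (0 : ℝ) wstar \ {wstar}, (wstar - x) * g x > 0) :
    (∃ y : ℝ → ℝ, IsSolutionTo g wstar y) ∧
    (∀ y : ℝ → ℝ, IsSolutionTo g wstar y →
      ((0 < wstar → MonotoneOn y (Ici 0)) ∧ (wstar < 0 → AntitoneOn y (Ici 0))) ∧
      Tendsto y atTop (nhds wstar)) ∧
    (∀ y : ℝ → ℝ, IsSolutionTo g wstar y →
      ∀ f : ℝ → ℝ, ContinuousOn f (uIcc (0 : ℝ) wstar) →
        Tendsto (fun t : ℝ => (1 / t) * ∫ s in (0 : ℝ)..t, f (y s))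
          atTop (nhds (f wstar))) := by
  have h : IsStableZero g wstar := ⟨hg, hgw, hsign⟩
  have hlim : ∀ y, IsSolutionTo g wstar y → Tendsto y atTop (𝓝 wstar) := fun y hy =>
    hw.lt_or_gt.elim (fun hneg => (h.antitoneOn_and_tendsto_of_neg hneg hy).2)
      fun hpos => (h.monotoneOn_and_tendsto_of_pos hpos hy).2
  refine ⟨h.exists_isSolutionTo hw,
    fun y hy => ⟨⟨fun hpos => ?_, fun hneg => ?_⟩, hlim y hy⟩,
    fun y hy f hf => hy.tendsto_average (hlim y hy) hf⟩
  exacts [(h.monotoneOn_and_tendsto_of_pos hpos hy).1,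
    (h.antitoneOn_and_tendsto_of_neg hneg hy).1]
end

section
/- Let w* ≤ 0 and let g: (−∞,0] → ℝ be convex and differentiable with g(w*) = 0 and χ := g'(0) < 0. Let y: [0,∞) → [w*, 0] be differentiable with y(0) = 0 and y'(t) = g(y(t)) for all t ≥ 0. Then for every t ≥ 0, 0 ≤ y(t) − w* ≤ (−w*)·e^{χt}; that is, |y(t) − w*| ≤ |w*|·e^{χt}. -/
open Set

/-! On `[w*, 0]` convexity puts `g` below its chord through `(w*, 0)` and `(0, g 0)`, whose slope
is at most `χ = g'(0)`; so `u = y - w*` satisfies `u' = g(y) ≤ χ u`, and `u(t) e^{-χt}` is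
antitone (Gronwall). -/

theorem ConvexOn.le_add_mul_sub_of_hasDerivWithinAt {s : Set ℝ} {g : ℝ → ℝ} {a b w χ : ℝ}
    (hg : ConvexOn ℝ s g) (ha : a ∈ s) (hb : b ∈ s) (hw : w ∈ Icc a b)
    (hχ : HasDerivWithinAt g χ s b) : g w ≤ g a + χ * (w - a) := by
  rcases hw.1.eq_or_lt with rfl | haw
  · simp
  have hab : a < b := haw.trans_le hw.2
  have hws : w ∈ s := hg.1.ordConnected.out ha hb hw
  have hslope : slope g a w ≤ χ :=
    calc slope g a w ≤ slope g a b :=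
          hg.slope_mono ha ⟨hws, haw.ne'⟩ ⟨hb, hab.ne'⟩ hw.2
      _ ≤ χ := hg.slope_le_of_hasDerivWithinAt ha hb hab hχ
  have hchord : (w - a) * slope g a w = g w - g a := sub_smul_slope g a w
  nlinarith [sub_nonneg.2 hw.1]

theorem le_mul_exp_of_hasDerivWithinAt_le_mul {u u' : ℝ → ℝ} {a χ : ℝ}
    (hu : ∀ t, a ≤ t → HasDerivWithinAt u (u' t) (Ici a) t)
    (hu' : ∀ t, a < t → u' t ≤ χ * u t) {t : ℝ} (ht : a ≤ t) :
    u t ≤ u a * Real.exp (χ * (t - a)) := by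
  set v : ℝ → ℝ := fun s => u s * Real.exp (-χ * (s - a))
  have hv : ∀ s ∈ Ioi a,
      HasDerivWithinAt v ((u' s - χ * u s) * Real.exp (-χ * (s - a))) (Ioi a) s := by
    intro s hs
    have hexp : HasDerivAt (fun s => Real.exp (-χ * (s - a)))
        (Real.exp (-χ * (s - a)) * (-χ * 1)) s :=
      (((hasDerivAt_id s).sub_const a).const_mul (-χ)).exp
    exact (((hu s hs.le).hasDerivAt (Ici_mem_nhds hs)).mul hexp).hasDerivWithinAt.congr_deriv
      (by ring)
  have hv_anti : AntitoneOn v (Ici a) := by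
    refine antitoneOn_of_hasDerivWithinAt_nonpos (convex_Ici a)
      (f' := fun s => (u' s - χ * u s) * Real.exp (-χ * (s - a))) ?_ ?_ ?_
    · exact fun s hs => ((hu s hs).continuousWithinAt).mul (by fun_prop)
    · rw [interior_Ici]
      exact hv
    · rw [interior_Ici]
      exact fun s hs => mul_nonpos_of_nonpos_of_nonneg (sub_nonpos.2 (hu' s hs)) (by positivity)
  have hvt : v t ≤ u a := by simpa [v] using hv_anti self_mem_Ici ht ht
  calc u t = v t * Real.exp (χ * (t - a)) := by
        rw [mul_assoc, ← Real.exp_add, neg_mul, neg_add_cancel, Real.exp_zero, mul_one]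
    _ ≤ u a * Real.exp (χ * (t - a)) := by gcongr

theorem gronwall_convergence_rate_general (wstar : ℝ) (hw : wstar ≤ 0) (g : ℝ → ℝ)
    (hconv : ConvexOn ℝ (Iic (0 : ℝ)) g)
    (hgw : g wstar = 0) (χ : ℝ) (hχ : HasDerivWithinAt g χ (Iic (0 : ℝ)) 0)
    (y : ℝ → ℝ) (hy0 : y 0 = 0)
    (hyrange : ∀ t : ℝ, 0 ≤ t → y t ∈ Icc wstar 0)
    (hyderiv : ∀ t : ℝ, 0 ≤ t → HasDerivWithinAt y (g (y t)) (Ici 0) t) :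
    ∀ t : ℝ, 0 ≤ t → 0 ≤ y t - wstar ∧ y t - wstar ≤ (-wstar) * Real.exp (χ * t) := by
  intro t ht
  have hg_le : ∀ s, 0 < s → g (y s) ≤ χ * (y s - wstar) := fun s hs => by
    simpa [hgw] using hconv.le_add_mul_sub_of_hasDerivWithinAt hw self_mem_Iic
      (hyrange s hs.le) hχ
  refine ⟨sub_nonneg.2 (hyrange t ht).1, ?_⟩
  simpa [hy0] using le_mul_exp_of_hasDerivWithinAt_le_mul
    (fun s hs => (hyderiv s hs).sub_const wstar) hg_le ht

/-- Corollary 3.5 in scalar ODE form: exponential convergence of the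
solution of `y' = g(y)`, `y(0) = 0` to the zero `w* ≤ 0` of the convex function `g`,
with rate `χ = g'(0) < 0`: `0 ≤ y(t) − w* ≤ (−w*)·e^{χt}`. -/
theorem gronwall_convergence_rate (wstar : ℝ) (hw : wstar ≤ 0) (g : ℝ → ℝ)
    (hconv : ConvexOn ℝ (Iic (0 : ℝ)) g)
    (hdiff : ∀ w ∈ Iic (0 : ℝ), DifferentiableWithinAt ℝ g (Iic (0 : ℝ)) w)
    (hgw : g wstar = 0) (χ : ℝ) (hχ : HasDerivWithinAt g χ (Iic (0 : ℝ)) 0)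
    (hχneg : χ < 0) (y : ℝ → ℝ) (hy0 : y 0 = 0)
    (hyrange : ∀ t : ℝ, 0 ≤ t → y t ∈ Icc wstar 0)
    (hyderiv : ∀ t : ℝ, 0 ≤ t → HasDerivWithinAt y (g (y t)) (Ici 0) t) :
    ∀ t : ℝ, 0 ≤ t → 0 ≤ y t - wstar ∧ y t - wstar ≤ (-wstar) * Real.exp (χ * t) :=
  gronwall_convergence_rate_general wstar hw g hconv hgw χ hχ y hy0 hyrange hyderiv
end

section
/- Let λ > 0, κ₊ > 0, ρ ≤ 0 and t > 0, and set ε := 1 − e^{−λt} ∈ (0,1). Define u₊ := 1/2 + √(1/4 + 2κ₊λ/ε) and u₋ := 1/2 − ρλ/ε − √(1/4 + (2κ₊ − ρ)λ/ε + ρ²λ²/ε²). Then u₊ > 1, 0 < 2λκ₊ < u₊(u₊ − 1), and −(1/λ)·log(1 − 2λκ₊/(u₊(u₊−1))) = t; and u₋ < 0, κ₊ − ρu₋ > 0, 0 < 2λ(κ₊ − ρu₋) < u₋(u₋ − 1), and −(1/λ)·log(1 − 2λ(κ₊ − ρu₋)/(u₋(u₋−1))) = t. -/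
open Real

/-- critical moment functions in the BNS model: with
`ε = 1 − e^{−λt}`, the numbers `u₊ = 1/2 + √(1/4 + 2κ₊λ/ε)` and
`u₋ = 1/2 − ρλ/ε − √(1/4 + (2κ₊−ρ)λ/ε + ρ²λ²/ε²)` satisfy the stated inequalities
and invert the explosion time formula `T_*(u) = −(1/λ)log(1 − 2λk(u)/(u(u−1)))`. -/
theorem bns_critical_moments (lam κ ρ t ε up um : ℝ)
    (hlam : 0 < lam) (hκ : 0 < κ) (hρ : ρ ≤ 0) (ht : 0 < t)
    (hε : ε = 1 - Real.exp (-lam * t))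
    (hup : up = 1 / 2 + Real.sqrt (1 / 4 + 2 * κ * lam / ε))
    (hum : um = 1 / 2 - ρ * lam / ε -
      Real.sqrt (1 / 4 + (2 * κ - ρ) * lam / ε + ρ ^ 2 * lam ^ 2 / ε ^ 2)) :
    (0 < ε ∧ ε < 1) ∧
    (1 < up ∧ 0 < 2 * lam * κ ∧ 2 * lam * κ < up * (up - 1) ∧
      -(1 / lam) * Real.log (1 - 2 * lam * κ / (up * (up - 1))) = t) ∧
    (um < 0 ∧ 0 < κ - ρ * um ∧ 0 < 2 * lam * (κ - ρ * um) ∧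
      2 * lam * (κ - ρ * um) < um * (um - 1) ∧
      -(1 / lam) * Real.log (1 - 2 * lam * (κ - ρ * um) / (um * (um - 1))) = t) := by
  have hε0 : 0 < ε := by
    rw [hε]
    have h1 : Real.exp (-lam * t) < 1 := by
      rw [Real.exp_lt_one_iff]; nlinarith
    linarith
  have hε1 : ε < 1 := by
    rw [hε]; have := Real.exp_pos (-lam * t); linarith
  have hεne : ε ≠ 0 := ne_of_gt hε0
  have hlamne : lam ≠ 0 := ne_of_gt hlam
  -- u₊ part
  obtain ⟨p, hpdef⟩ : ∃ p, p = Real.sqrt (1 / 4 + 2 * κ * lam / ε) := ⟨_, rfl⟩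
  rw [← hpdef] at hup
  have hApos : 0 < 2 * κ * lam / ε := by positivity
  have hA : (0:ℝ) ≤ 1 / 4 + 2 * κ * lam / ε := by linarith
  have hp2 : p ^ 2 = 1 / 4 + 2 * κ * lam / ε := by rw [hpdef]; exact Real.sq_sqrt hA
  have hpnn : 0 ≤ p := hpdef ▸ Real.sqrt_nonneg _
  have hp_half : 1 / 2 < p := by nlinarith [hp2, hpnn, hApos]
  have hup1 : 1 < up := by rw [hup]; linarith
  have hupid : up * (up - 1) = 2 * lam * κ / ε := by
    rw [hup]; linear_combination hp2
  have hprod_pos : 0 < up * (up - 1) := by rw [hupid]; positivity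
  have hupkey : 2 * lam * κ = up * (up - 1) * ε := (div_eq_iff hεne).mp hupid.symm
  have hupdiv : 2 * lam * κ / (up * (up - 1)) = ε := by
    rw [hupkey]; exact mul_div_cancel_left₀ ε (ne_of_gt hprod_pos)
  have h1mε : 1 - ε = Real.exp (-lam * t) := by rw [hε]; ring
  have huplog : -(1 / lam) * Real.log (1 - 2 * lam * κ / (up * (up - 1))) = t := by
    rw [hupdiv, h1mε, Real.log_exp]; field_simp
  -- u₋ part
  obtain ⟨s, hsdef⟩ : ∃ s,
      s = Real.sqrt (1 / 4 + (2 * κ - ρ) * lam / ε + ρ ^ 2 * lam ^ 2 / ε ^ 2) := ⟨_, rfl⟩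
  rw [← hsdef] at hum
  have hB1 : 0 < (2 * κ - ρ) * lam / ε :=
    div_pos (mul_pos (by linarith) hlam) hε0
  have hB2 : (0:ℝ) ≤ ρ ^ 2 * lam ^ 2 / ε ^ 2 := by positivity
  have hB : (0:ℝ) ≤ 1 / 4 + (2 * κ - ρ) * lam / ε + ρ ^ 2 * lam ^ 2 / ε ^ 2 := by linarith
  have hs2 : s ^ 2 = 1 / 4 + (2 * κ - ρ) * lam / ε + ρ ^ 2 * lam ^ 2 / ε ^ 2 := by
    rw [hsdef]; exact Real.sq_sqrt hB
  have hsnn : 0 ≤ s := hsdef ▸ Real.sqrt_nonneg _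
  have ha : ρ * lam / ε ≤ 0 :=
    div_nonpos_of_nonpos_of_nonneg (mul_nonpos_of_nonpos_of_nonneg hρ hlam.le) hε0.le
  have hsq_eq : ρ ^ 2 * lam ^ 2 / ε ^ 2 = (ρ * lam / ε) ^ 2 := by ring
  have hsplit : (2 * κ - ρ) * lam / ε = 2 * κ * lam / ε - ρ * lam / ε := by ring
  have hum_neg : um < 0 := by
    rw [hum]
    have hlt : 1 / 2 - ρ * lam / ε < s := by
      by_contra h
      push_neg at h
      nlinarith [mul_self_le_mul_self hsnn h, hs2, hApos, hsq_eq, hsplit]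
    linarith
  have humid : um * (um - 1) = 2 * lam * (κ - ρ * um) / ε := by
    rw [hum]; linear_combination hs2
  have hprod2 : 0 < um * (um - 1) := by
    have h := mul_pos (neg_pos.mpr hum_neg) (show (0:ℝ) < 1 - um by linarith)
    have he : um * (um - 1) = -um * (1 - um) := by ring
    rw [he]; exact h
  have humkey : 2 * lam * (κ - ρ * um) = um * (um - 1) * ε := (div_eq_iff hεne).mp humid.symm
  have h2X : 0 < 2 * lam * (κ - ρ * um) := by rw [humkey]; exact mul_pos hprod2 hε0
  have hκρ : 0 < κ - ρ * um := by
    by_contra h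
    push_neg at h
    have h3 : 2 * lam * (κ - ρ * um) ≤ 0 :=
      mul_nonpos_of_nonneg_of_nonpos (by linarith) h
    linarith
  have humdiv : 2 * lam * (κ - ρ * um) / (um * (um - 1)) = ε := by
    rw [humkey]; exact mul_div_cancel_left₀ ε (ne_of_gt hprod2)
  have humlog : -(1 / lam) * Real.log (1 - 2 * lam * (κ - ρ * um) / (um * (um - 1))) = t := by
    rw [humdiv, h1mε, Real.log_exp]; field_simp
  refine ⟨⟨hε0, hε1⟩, ⟨hup1, by positivity, ?_, huplog⟩,
    ⟨hum_neg, hκρ, by positivity, ?_, humlog⟩⟩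
  · rw [hupkey]; exact mul_lt_of_lt_one_right hprod_pos hε1
  · rw [humkey]; exact mul_lt_of_lt_one_right hprod2 hε1
end

section
/- Let U ⊆ ℝ be open, T > 0, and let ψ: [0,T] × U → ℝ be continuous and satisfy: (i) ψ(0,w) = w for all w ∈ U; (ii) ψ(t,w) ∈ U and ψ(t+s, w) = ψ(s, ψ(t,w)) for all w ∈ U and all s, t ≥ 0 with s + t ≤ T; (iii) for each t ∈ [0,T] the map w ↦ ψ(t,w) is differentiable, and (t,w) ↦ ∂ψ/∂w(t,w) is continuous on [0,T] × U. Then for every w ∈ U there exists s₀ ∈ (0,T] such that for every s ∈ (0, s₀] the number M_s := (1/s)∫₀^s ∂ψ/∂w(r,w) dr is nonzero, the limit lim_{t↓0} (ψ(t,w) − w)/t exists in ℝ, and it equals ((ψ(s,w) − w)/s)·M_s^{−1}. -/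
open Set Filter MeasureTheory intervalIntegral Topology Function

/-! Fix `s` and put `G x = ∫₀ˢ ψ(r, x) dr`. Integrating the flow property over `r ∈ [0, s]` gives
`G (ψ(t, w)) - G w = ∫ₛ^{s+t} ψ(r, w) dr - ∫₀ᵗ ψ(r, w) dr`, so `(G (ψ(t, w)) - G w) / t` tends to
`ψ(s, w) - w` as `t ↓ 0`. Differentiating under the integral, `G' w = ∫₀ˢ ∂ψ/∂w(r, w) dr`, which is
nonzero for small `s` because `∂ψ/∂w(0, w) = 1`. Since `ψ(t, w) → w`, the chain rule can then be
run backwards: `(ψ(t, w) - w) / t` converges to `(ψ(s, w) - w) / G' w`. -/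

theorem HasDerivAt.tendsto_sub_div_of_tendsto_comp_sub_div {𝕜 α : Type*}
    [NontriviallyNormedField 𝕜] {G : 𝕜 → 𝕜} {D w L : 𝕜} (hG : HasDerivAt G D w) (hD : D ≠ 0)
    {l : Filter α} {φ g : α → 𝕜} (hφ : Tendsto φ l (𝓝 w))
    (h : Tendsto (fun t => (G (φ t) - G w) / g t) l (𝓝 L)) :
    Tendsto (fun t => (φ t - w) / g t) l (𝓝 (L / D)) := by
  have hslope : Tendsto (fun t => dslope G w (φ t)) l (𝓝 D) := by
    have := (continuousAt_dslope_same.2 hG.differentiableAt).tendsto.comp hφ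
    rwa [dslope_same, hG.deriv] at this
  refine (h.div hslope hD).congr' ?_
  filter_upwards [hslope.eventually_ne hD] with t ht
  change (G (φ t) - G w) / g t / dslope G w (φ t) = _
  rw [← sub_smul_dslope G w (φ t), smul_eq_mul, mul_div_right_comm, mul_div_cancel_right₀ _ ht]

theorem tendsto_intervalIntegral_div_nhdsGT {f : ℝ → ℝ} {a b : ℝ} (hab : a < b)
    (hf : ContinuousOn f (Icc a b)) :
    Tendsto (fun t => (∫ r in a..a + t, f r) / t) (𝓝[>] 0) (𝓝 (f a)) := by
  have hmeas : StronglyMeasurableAtFilter f (𝓝[>] a) := by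
    rw [← nhdsWithin_Ioo_eq_nhdsGT hab]
    exact (hf.mono Ioo_subset_Icc_self).stronglyMeasurableAtFilter_nhdsWithin measurableSet_Ioo a
  have hcont : ContinuousWithinAt f (Ioi a) a :=
    (hf a (left_mem_Icc.2 hab.le)).mono_of_mem_nhdsWithin (Icc_mem_nhdsGT hab)
  have hderiv : HasDerivWithinAt (fun u => ∫ r in a..u, f r) (f a) (Ioi a) a :=
    (integral_hasDerivWithinAt_right IntervalIntegrable.refl hmeas hcont (s := Ici a)).Ioi_of_Ici
  have hshift : Tendsto (a + ·) (𝓝[>] 0) (𝓝[>] a) := by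
    have h := map_add_left_nhdsGT (c := a) (a := 0)
    rw [add_zero] at h
    exact h.le
  refine ((hasDerivWithinAt_iff_tendsto_slope' (lt_irrefl a)).1 hderiv |>.comp hshift).congr ?_
  intro t
  simp [slope_def_field, div_eq_inv_mul]

theorem eventually_intervalIntegral_pos_nhdsGT {f : ℝ → ℝ} {a b : ℝ} (hab : a < b)
    (hf : ContinuousOn f (Icc a b)) (ha : 0 < f a) :
    ∀ᶠ s in 𝓝[>] a, 0 < ∫ r in a..s, f r := by
  have hpos : ∀ᶠ r in 𝓝[>] a, 0 < f r :=
    ((hf a (left_mem_Icc.2 hab.le)).mono_of_mem_nhdsWithin (Icc_mem_nhdsGT hab)).eventually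
      (lt_mem_nhds ha)
  obtain ⟨u, hu, hsub⟩ := mem_nhdsGT_iff_exists_Ioo_subset.1 hpos
  filter_upwards [Ioo_mem_nhdsGT (lt_min hu hab)] with s hs
  refine intervalIntegral_pos_of_pos_on ?_ (fun r hr => hsub ⟨hr.1, ?_⟩) hs.1
  · have hsb : s ≤ b := hs.2.le.trans (min_le_right _ _)
    exact (hf.mono (Icc_subset_Icc le_rfl hsb)).intervalIntegrable_of_Icc hs.1.le
  · exact hr.2.trans (hs.2.trans_le (min_le_left _ _))

theorem hasDerivAt_intervalIntegral_of_continuousOn {F F' : ℝ → ℝ → ℝ} {U : Set ℝ} {a b x : ℝ}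
    (hU : IsOpen U) (hx : x ∈ U) (hF : ContinuousOn (uncurry F) (uIcc a b ×ˢ U))
    (hF' : ContinuousOn (uncurry F') (uIcc a b ×ˢ U))
    (hd : ∀ r ∈ uIcc a b, ∀ y ∈ U, HasDerivAt (F r) (F' r y) y) :
    HasDerivAt (fun y => ∫ r in a..b, F r y) (∫ r in a..b, F' r x) x := by
  obtain ⟨ε, hε, hball⟩ := Metric.nhds_basis_closedBall.mem_iff.1 (hU.mem_nhds hx)
  obtain ⟨C, hC⟩ := (isCompact_uIcc.prod (isCompact_closedBall x ε)).exists_bound_of_continuousOn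
    (hF'.mono (prod_mono le_rfl hball))
  refine (hasDerivAt_integral_of_dominated_loc_of_deriv_le (F := fun y r => F r y)
    (F' := fun y r => F' r y) (bound := fun _ => C) (Metric.closedBall_mem_nhds x hε)
    ?_ (hF.uncurry_right x hx).intervalIntegrable
    (hF'.uncurry_right x hx).intervalIntegrable.def'.aestronglyMeasurable ?_
    intervalIntegrable_const ?_).2
  · filter_upwards [hU.mem_nhds hx] with y hy
    exact (hF.uncurry_right y hy).intervalIntegrable.def'.aestronglyMeasurable
  · exact ae_of_all _ fun r hr y hy => hC (r, y) ⟨uIoc_subset_uIcc hr, hy⟩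
  · exact ae_of_all _ fun r hr y hy => hd r (uIoc_subset_uIcc hr) y (hball hy)

section Flow

variable {ψ : ℝ → ℝ → ℝ} {T w s t : ℝ}

theorem intervalIntegral_flow_eq
    (hflow : ∀ s t : ℝ, 0 ≤ s → 0 ≤ t → s + t ≤ T → ψ (t + s) w = ψ s (ψ t w))
    (hs : 0 ≤ s) (ht : 0 ≤ t) (hst : t + s ≤ T) :
    ∫ r in 0..s, ψ r (ψ t w) = ∫ r in t..t + s, ψ r w := by
  have hshift := integral_comp_add_left (a := 0) (b := s) (fun r => ψ r w) t
  rw [add_zero] at hshift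
  rw [← hshift]
  refine integral_congr fun r hr => ?_
  rw [uIcc_of_le hs] at hr
  exact (hflow r t hr.1 ht (by linarith [hr.2])).symm

theorem intervalIntegral_flow_sub_eq
    (hflow : ∀ s t : ℝ, 0 ≤ s → 0 ≤ t → s + t ≤ T → ψ (t + s) w = ψ s (ψ t w))
    (hψ : ContinuousOn (fun r => ψ r w) (Icc 0 T)) (hs : 0 ≤ s) (ht : 0 ≤ t) (hst : t + s ≤ T) :
    (∫ r in 0..s, ψ r (ψ t w)) - ∫ r in 0..s, ψ r w =
      (∫ r in s..s + t, ψ r w) - ∫ r in 0..t, ψ r w := by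
  have hint : ∀ a ∈ Icc 0 T, ∀ b ∈ Icc 0 T, IntervalIntegrable (fun r => ψ r w) volume a b :=
    fun a ha b hb => (hψ.mono (uIcc_subset_Icc ha hb)).intervalIntegrable
  have h0 : (0 : ℝ) ∈ Icc 0 T := ⟨le_rfl, by linarith⟩
  have hs' : s ∈ Icc 0 T := ⟨hs, by linarith⟩
  have ht' : t ∈ Icc 0 T := ⟨ht, by linarith⟩
  have hts : t + s ∈ Icc 0 T := ⟨by linarith, hst⟩
  rw [intervalIntegral_flow_eq hflow hs ht hst, integral_interval_sub_interval_comm'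
    (hint t ht' _ hts) (hint 0 h0 s hs') (hint t ht' 0 h0), add_comm]

end Flow

theorem tendsto_flow_slope_nhdsGT {U : Set ℝ} {ψ ψw : ℝ → ℝ → ℝ} {T w s : ℝ} (hU : IsOpen U)
    (hcont : ContinuousOn (uncurry ψ) (Icc 0 T ×ˢ U)) (hid : ψ 0 w = w)
    (hflow : ∀ s t : ℝ, 0 ≤ s → 0 ≤ t → s + t ≤ T → ψ (t + s) w = ψ s (ψ t w))
    (hdiff : ∀ t ∈ Icc (0 : ℝ) T, ∀ y ∈ U, HasDerivAt (ψ t) (ψw t y) y)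
    (hwcont : ContinuousOn (uncurry ψw) (Icc 0 T ×ˢ U)) (hw : w ∈ U) (hs : 0 ≤ s) (hsT : s < T)
    (hD : ∫ r in 0..s, ψw r w ≠ 0) :
    Tendsto (fun t => (ψ t w - w) / t) (𝓝[>] 0) (𝓝 ((ψ s w - w) / ∫ r in 0..s, ψw r w)) := by
  have hT : 0 < T := hs.trans_lt hsT
  have hψ : ContinuousOn (fun r => ψ r w) (Icc 0 T) := hcont.uncurry_right w hw
  have hIcc : uIcc 0 s ⊆ Icc 0 T := by
    rw [uIcc_of_le hs]
    exact Icc_subset_Icc le_rfl hsT.le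
  have hG := hasDerivAt_intervalIntegral_of_continuousOn hU hw
    (hcont.mono (prod_mono hIcc le_rfl)) (hwcont.mono (prod_mono hIcc le_rfl))
    (fun r hr => hdiff r (hIcc hr))
  have hφ : Tendsto (fun t => ψ t w) (𝓝[>] 0) (𝓝 w) := by
    have h := ((hψ 0 (left_mem_Icc.2 hT.le)).mono_of_mem_nhdsWithin (Icc_mem_nhdsGT hT)).tendsto
    rwa [hid] at h
  refine hG.tendsto_sub_div_of_tendsto_comp_sub_div hD hφ ?_
  have h0 := tendsto_intervalIntegral_div_nhdsGT hT hψ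
  have hs' := tendsto_intervalIntegral_div_nhdsGT hsT (hψ.mono (Icc_subset_Icc hs le_rfl))
  simp only [zero_add, hid] at h0
  refine (hs'.sub h0).congr' ?_
  filter_upwards [Ioo_mem_nhdsGT (sub_pos.2 hsT)] with t ht
  rw [intervalIntegral_flow_sub_eq hflow hψ hs ht.1.le (by linarith [ht.2]), sub_div]

theorem flow_time_differentiable_at_zero_general (U : Set ℝ) (hU : IsOpen U)
    (T : ℝ) (hT : 0 < T) (ψ ψw : ℝ → ℝ → ℝ)
    (hcont : ContinuousOn (fun p : ℝ × ℝ => ψ p.1 p.2) (Icc 0 T ×ˢ U))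
    (hid : ∀ w ∈ U, ψ 0 w = w)
    (hflow : ∀ w ∈ U, ∀ s t : ℝ, 0 ≤ s → 0 ≤ t → s + t ≤ T →
      ψ (t + s) w = ψ s (ψ t w))
    (hdiff : ∀ t ∈ Icc (0 : ℝ) T, ∀ w ∈ U, HasDerivAt (ψ t) (ψw t w) w)
    (hwcont : ContinuousOn (fun p : ℝ × ℝ => ψw p.1 p.2) (Icc 0 T ×ˢ U)) :
    ∀ w ∈ U, ∃ s₀ : ℝ, 0 < s₀ ∧ s₀ ≤ T ∧
      ∀ s : ℝ, 0 < s → s ≤ s₀ →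
        (1 / s) * (∫ r in (0 : ℝ)..s, ψw r w) ≠ 0 ∧
        Tendsto (fun t : ℝ => (ψ t w - w) / t) (𝓝[>] (0 : ℝ))
          (𝓝 (((ψ s w - w) / s) * ((1 / s) * ∫ r in (0 : ℝ)..s, ψw r w)⁻¹)) := by
  intro w hw
  have hψw0 : ψw 0 w = 1 := by
    refine (hdiff 0 (left_mem_Icc.2 hT.le) w hw).unique
      ((hasDerivAt_id w).congr_of_eventuallyEq ?_)
    filter_upwards [hU.mem_nhds hw] with x hx using hid x hx
  have hsmall : ∀ᶠ s in 𝓝[>] 0, s < T ∧ 0 < ∫ r in 0..s, ψw r w :=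
    (eventually_nhdsWithin_of_eventually_nhds (eventually_lt_nhds hT)).and
      (eventually_intervalIntegral_pos_nhdsGT hT (hwcont.uncurry_right w hw)
        (by rw [hψw0]; exact one_pos))
  obtain ⟨s₀, hs₀, hsub⟩ := mem_nhdsGT_iff_exists_Ioc_subset.1 hsmall
  refine ⟨min s₀ T, lt_min hs₀ hT, min_le_right _ _, fun s hs hss => ?_⟩
  obtain ⟨hsT, hD⟩ := hsub ⟨hs, hss.trans (min_le_left _ _)⟩
  refine ⟨by positivity, ?_⟩
  convert tendsto_flow_slope_nhdsGT hU hcont (hid w hw) (hflow w hw) hdiff hwcont hw hs.le hsT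
    hD.ne' using 2
  field_simp

/-- Montgomery–Zippin argument in the proof of Theorem 2.1: for a
continuous local flow `ψ` on an open set `U ⊆ ℝ` with `ψ(0,w) = w`, the semigroup
property, and continuously differentiable dependence `∂ψ/∂w` on the state, the
time derivative of `ψ` at `t = 0` exists and equals
`((ψ(s,w) − w)/s)·M_s⁻¹` with `M_s = (1/s)∫₀^s ∂ψ/∂w(r,w) dr`. -/
theorem flow_time_differentiable_at_zero (U : Set ℝ) (hU : IsOpen U)
    (T : ℝ) (hT : 0 < T) (ψ ψw : ℝ → ℝ → ℝ)
    (hcont : ContinuousOn (fun p : ℝ × ℝ => ψ p.1 p.2) (Icc 0 T ×ˢ U))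
    (hid : ∀ w ∈ U, ψ 0 w = w)
    (hmem : ∀ w ∈ U, ∀ t ∈ Icc (0 : ℝ) T, ψ t w ∈ U)
    (hflow : ∀ w ∈ U, ∀ s t : ℝ, 0 ≤ s → 0 ≤ t → s + t ≤ T →
      ψ (t + s) w = ψ s (ψ t w))
    (hdiff : ∀ t ∈ Icc (0 : ℝ) T, ∀ w ∈ U, HasDerivAt (ψ t) (ψw t w) w)
    (hwcont : ContinuousOn (fun p : ℝ × ℝ => ψw p.1 p.2) (Icc 0 T ×ˢ U)) :
    ∀ w ∈ U, ∃ s₀ : ℝ, 0 < s₀ ∧ s₀ ≤ T ∧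
      ∀ s : ℝ, 0 < s → s ≤ s₀ →
        (1 / s) * (∫ r in (0 : ℝ)..s, ψw r w) ≠ 0 ∧
        Tendsto (fun t : ℝ => (ψ t w - w) / t) (𝓝[>] (0 : ℝ))
          (𝓝 (((ψ s w - w) / s) * ((1 / s) * ∫ r in (0 : ℝ)..s, ψw r w)⁻¹)) :=
  flow_time_differentiable_at_zero_general U hU T hT ψ ψw hcont hid hflow hdiff hwcont
end

section
/- Let ζ > 0, λ > 0 and ρ, u ∈ ℝ. Set χ := ρζu − λ, χ⁺ := ρζu + λ, Δ := χ² − ζ²(u² − u), and R(η) := (u² − u)/2 + χη + (ζ²/2)η². If 0 < √Δ < −χ⁺ (in particular Δ > 0 and χ⁺ < 0), then R(η) > 0 for all η ∈ [0, 2λ/ζ²] and ∫₀^{2λ/ζ²} dη/R(η) = (1/√Δ)·log |(χ⁺χ + 2λ√Δ − Δ)/(χ⁺χ − 2λ√Δ − Δ)|. -/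
/-!
The hypothesis `√Δ < -χ⁺` says that both roots `q = (-χ - √Δ)/ζ² < p = (-χ + √Δ)/ζ²` of `R`
lie beyond `2λ/ζ²`, so `R = ζ²/2 · (p - η)(q - η)` is positive on `[0, 2λ/ζ²]`. Partial fractions
give the antiderivative `log ((p - η)/(q - η)) / (p - q)`, and `p - q = 2√Δ/ζ²`.
-/

open Set MeasureTheory intervalIntegral Real

theorem integral_one_div_sub_mul_sub {a b p q : ℝ} (hab : a ≤ b) (hbp : b < p) (hbq : b < q)
    (hpq : p ≠ q) :
    ∫ x in a..b, 1 / ((p - x) * (q - x)) =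
      log ((p - b) / (q - b) / ((p - a) / (q - a))) / (p - q) := by
  have hp : ∀ x ∈ uIcc a b, 0 < p - x := fun x hx => by
    rw [uIcc_of_le hab] at hx; linarith [hx.2]
  have hq : ∀ x ∈ uIcc a b, 0 < q - x := fun x hx => by
    rw [uIcc_of_le hab] at hx; linarith [hx.2]
  have hderiv : ∀ x ∈ uIcc a b,
      HasDerivAt (fun y => (log (p - y) - log (q - y)) / (p - q)) (1 / ((p - x) * (q - x))) x := by
    intro x hx
    have hlog : ∀ r, 0 < r - x → HasDerivAt (fun y => log (r - y)) (-1 / (r - x)) x := fun r hr => by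
      simpa using ((hasDerivAt_id x).const_sub r).log hr.ne'
    refine (((hlog p (hp x hx)).sub (hlog q (hq x hx))).div_const (p - q)).congr_deriv ?_
    field_simp [(hp x hx).ne', (hq x hx).ne', sub_ne_zero.mpr hpq]
    ring
  have hcont : ContinuousOn (fun x => 1 / ((p - x) * (q - x))) (uIcc a b) :=
    continuousOn_const.div (by fun_prop) fun x hx => (mul_pos (hp x hx) (hq x hx)).ne'
  have hb : b ∈ uIcc a b := right_mem_uIcc
  have ha : a ∈ uIcc a b := left_mem_uIcc
  rw [integral_eq_sub_of_hasDerivAt hderiv hcont.intervalIntegrable,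
    log_div (div_pos (hp b hb) (hq b hb)).ne' (div_pos (hp a ha) (hq a ha)).ne',
    log_div (hp b hb).ne' (hq b hb).ne', log_div (hp a ha).ne' (hq a ha).ne']
  ring

theorem quadratic_eq_half_mul_sub_mul_sub {a b c s : ℝ} (ha : a ≠ 0)
    (hs : s ^ 2 = b ^ 2 - 2 * a * c) (x : ℝ) :
    c + b * x + a / 2 * x ^ 2 = a / 2 * (((-b + s) / a - x) * ((-b - s) / a - x)) := by
  field_simp
  linear_combination hs

/-- moment explosion time in the stationary variance regime for the
Heston model, case `0 < √Δ < −χ⁺`: with `χ = ρζu − λ`, `χ⁺ = ρζu + λ` and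
`Δ = χ² − ζ²(u²−u)`, if `0 < √Δ < −χ⁺` then `R > 0` on `[0, 2λ/ζ²]` and
`∫₀^{2λ/ζ²} dη/R(η) = (1/√Δ)·log|(χ⁺χ + 2λ√Δ − Δ)/(χ⁺χ − 2λ√Δ − Δ)|`. -/
theorem heston_stationary_explosion_time_log (ζ lam ρ u χ χp Δ : ℝ)
    (hζ : 0 < ζ) (hlam : 0 < lam)
    (hχ : χ = ρ * ζ * u - lam) (hχp : χp = ρ * ζ * u + lam)
    (hΔ : Δ = χ ^ 2 - ζ ^ 2 * (u ^ 2 - u))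
    (R : ℝ → ℝ) (hR : ∀ η, R η = (u ^ 2 - u) / 2 + χ * η + ζ ^ 2 / 2 * η ^ 2)
    (hΔpos : 0 < Real.sqrt Δ) (hΔχp : Real.sqrt Δ < -χp) :
    (∀ η ∈ Icc (0 : ℝ) (2 * lam / ζ ^ 2), 0 < R η) ∧
    (∫ η in (0 : ℝ)..(2 * lam / ζ ^ 2), 1 / R η) =
      1 / Real.sqrt Δ *
        Real.log (|(χp * χ + 2 * lam * Real.sqrt Δ - Δ) /
          (χp * χ - 2 * lam * Real.sqrt Δ - Δ)|) := by
  set s := √Δ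
  have hsΔ : s ^ 2 = Δ := sq_sqrt (sqrt_pos.mp hΔpos).le
  have hζ2 : 0 < ζ ^ 2 := by positivity
  have hχp' : χp = χ + 2 * lam := by rw [hχ, hχp]; ring
  set b := 2 * lam / ζ ^ 2
  set p := (-χ + s) / ζ ^ 2
  set q := (-χ - s) / ζ ^ 2
  have hRpq : ∀ η, R η = ζ ^ 2 / 2 * ((p - η) * (q - η)) := fun η => by
    rw [hR, quadratic_eq_half_mul_sub_mul_sub hζ2.ne' (by rw [hsΔ, hΔ]; ring)]
  have hb : 0 < b := by positivity
  have hbq : b < q := div_lt_div_of_pos_right (by linarith) hζ2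
  have hqp : q < p := div_lt_div_of_pos_right (by linarith) hζ2
  refine ⟨fun η hη => ?_, ?_⟩
  · rw [hRpq]
    exact mul_pos (by positivity) (mul_pos (by linarith [hη.2]) (by linarith [hη.2]))
  have hratio : (p - b) / (q - b) / (p / q) =
      (χp * χ + 2 * lam * s - Δ) / (χp * χ - 2 * lam * s - Δ) := by
    simp only [p, q, b]
    field_simp
    rw [hχp', ← hsΔ]
    congr 1 <;> ring
  have hintegrand : ∀ η, 1 / R η = 2 / ζ ^ 2 * (1 / ((p - η) * (q - η))) := fun η => by
    rw [hRpq]; field_simp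
  have hpb : 0 < p - b := by linarith
  have hqb : 0 < q - b := by linarith
  have hq0 : 0 < q := hb.trans hbq
  have hp0 : 0 < p := hq0.trans hqp
  simp_rw [hintegrand]
  rw [intervalIntegral.integral_const_mul, integral_one_div_sub_mul_sub hb.le (hbq.trans hqp) hbq hqp.ne',
    sub_zero, sub_zero, ← hratio, abs_of_pos (by positivity),
    show p - q = 2 * s / ζ ^ 2 by ring]
  field_simp
end
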